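/- arXiv:2309.06696 — 9 statements merged into one kernel-verified Lean document; each statement's English description precedes it below -/
import Mathlib

section
/- There exist absolute constants C, c > 0 such that for all positive integers n and f, every n-vertex graph G admits a subgraph H with at most C·f·n·(log n)^c edges that is an f-faulty-degree connectivity certificate of G. -/
/-!
Recursive expander decomposition with threshold `q = f + 1`. Let `W` be the set of non-isolated
vertices of `G`. If some `S ⊆ W` with `|S| ≤ |W| / 2` is crossed by at most `q|S|` edges, keep
the crossing edges, charging `q` to each vertex of `S`, and recurse on both sides; a vertex is
charged only when its part at least halves, so at most `log₂|W|` times, and the total is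
`q|W| log₂|W|`. Otherwise every such cut has more than `q|S|` edges, so after deleting any single
edge it still has more than `f|S|`, while an `f`-degree fault set meets at most `f|S|` of them:
every cut of `W` survives the faults, and `G` minus one edge is a certificate of `G`.
-/

open SimpleGraph

/-- `F` has faulty-degree at most `f`: every vertex is incident to at most `f` edges of `F`. -/
def DegLE {V : Type} (F : Set (Sym2 V)) (f : ℕ) : Prop :=
  ∀ v : V, {e ∈ F | v ∈ e}.ncard ≤ f

/-- `H` is an `f`-faulty-degree connectivity certificate of `G`. -/
def IsFDCertificate {V : Type} (G H : SimpleGraph V) (f : ℕ) : Prop :=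
  H ≤ G ∧ ∀ F : Set (Sym2 V), F ⊆ G.edgeSet → DegLE F f →
    ∀ u v : V, ((H.deleteEdges F).Reachable u v ↔ (G.deleteEdges F).Reachable u v)

namespace SimpleGraph

variable {V : Type} {G H K : SimpleGraph V} {S W : Set V} {u v : V}

lemma reachable_le_reachable_of_adj_le (h : G.Adj ≤ K.Reachable) : G.Reachable ≤ K.Reachable := by
  simp only [reachable_eq_reflTransGen] at h ⊢
  exact Relation.reflTransGen_closed h

lemma reachable_of_forall_exists_adj (hu : u ∈ W)
    (h : ∀ T ⊆ W, u ∈ T → v ∉ T → ∃ x ∈ T, ∃ y ∈ W \ T, K.Adj x y) : K.Reachable u v := by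
  by_contra huv
  obtain ⟨x, ⟨-, hux⟩, y, ⟨hyW, hyT⟩, hxy⟩ :=
    h {x ∈ W | K.Reachable u x} (fun _ hx => hx.1) ⟨hu, .rfl⟩ (fun hv' => huv hv'.2)
  exact hyT ⟨hyW, hux.trans hxy.reachable⟩

lemma deleteEdges_inter_edgeSet_of_le (h : H ≤ G) (F : Set (Sym2 V)) :
    H.deleteEdges (F ∩ G.edgeSet) = H.deleteEdges F := by
  ext x y
  simp only [deleteEdges_adj, Set.mem_inter_iff, not_and]
  exact ⟨fun ⟨hxy, hF⟩ => ⟨hxy, fun hF' => hF hF' (h hxy)⟩,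
    fun ⟨hxy, hF⟩ => ⟨hxy, fun hF' => absurd hF' hF⟩⟩

lemma between_self_lt (hv : v ∈ G.support) (hvS : v ∉ S) : G.between S S < G := by
  refine lt_of_le_of_ne between_le fun hG => hvS ?_
  obtain ⟨w, hvw⟩ := hv
  rw [← hG] at hvw
  exact hvw.2.elim And.left And.left

lemma support_between_self_subset : (G.between S S).support ⊆ G.support ∩ S := by
  rintro v ⟨w, hvw, hvw'⟩
  exact ⟨hvw.mem_support_left, hvw'.elim And.left And.left⟩

lemma between_compl_sup_between_sup_between (G : SimpleGraph V) (S : Set V) :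
    G.between S Sᶜ ⊔ (G.between S S ⊔ G.between Sᶜ Sᶜ) = G := by
  ext x y
  simp only [sup_adj, between_adj, Set.mem_compl_iff]
  tauto

lemma deleteEdges_singleton_between (G : SimpleGraph V) (S : Set V) (e : Sym2 V) :
    (G.deleteEdges {e}).between S Sᶜ = (G.between S Sᶜ).deleteEdges {e} := by
  ext x y
  simp only [between_adj, deleteEdges_adj]
  tauto

lemma ncard_edgeSet_sup_le [Finite V] (G₁ G₂ : SimpleGraph V) :
    (G₁ ⊔ G₂).edgeSet.ncard ≤ G₁.edgeSet.ncard + G₂.edgeSet.ncard := by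
  rw [edgeSet_sup]
  exact Set.ncard_union_le _ _

end SimpleGraph

open SimpleGraph

section

variable {V : Type} {G H K G₁ G₂ H₁ H₂ : SimpleGraph V} {F F' : Set (Sym2 V)} {f : ℕ} {S : Set V}

lemma DegLE.mono [Finite V] (hF : DegLE F f) (h : F' ⊆ F) : DegLE F' f := fun v =>
  (Set.ncard_le_ncard (t := {e ∈ F | v ∈ e}) (fun _ he => ⟨h he.1, he.2⟩)).trans (hF v)

lemma DegLE.ncard_inter_le [Finite V] (hF : DegLE F f) {E : Set (Sym2 V)}
    (hE : ∀ e ∈ E, ∃ v ∈ S, v ∈ e) : (E ∩ F).ncard ≤ f * S.ncard := by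
  classical
  set T := S.toFinite.toFinset
  calc (E ∩ F).ncard ≤ (⋃ v ∈ T, {e ∈ F | v ∈ e}).ncard := by
        refine Set.ncard_le_ncard ?_ (Set.toFinite _)
        rintro e ⟨heE, heF⟩
        obtain ⟨v, hv, hve⟩ := hE e heE
        exact Set.mem_biUnion (by simpa [T] using hv) ⟨heF, hve⟩
    _ ≤ ∑ v ∈ T, {e ∈ F | v ∈ e}.ncard := T.set_ncard_biUnion_le _
    _ ≤ ∑ _v ∈ T, f := Finset.sum_le_sum fun v _ => hF v
    _ = f * S.ncard := by rw [Finset.sum_const, smul_eq_mul, Set.ncard_eq_toFinset_card S, mul_comm]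

lemma DegLE.exists_adj_of_lt_ncard_between [Finite V] (hF : DegLE F f)
    (h : f * S.ncard < (H.between S Sᶜ).edgeSet.ncard) :
    ∃ x ∈ S, ∃ y ∉ S, (H.deleteEdges F).Adj x y := by
  have hE : ∀ e ∈ (H.between S Sᶜ).edgeSet, ∃ v ∈ S, v ∈ e := by
    rintro ⟨x, y⟩ ⟨-, ⟨hx, -⟩ | ⟨-, hy⟩⟩
    exacts [⟨x, hx, Sym2.mem_mk_left x y⟩, ⟨y, hy, Sym2.mem_mk_right x y⟩]
  obtain ⟨e, he, heF⟩ := Set.not_subset.mp fun hsub => by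
    have := hF.ncard_inter_le hE
    rw [Set.inter_eq_left.mpr hsub] at this
    omega
  induction e using Sym2.ind with | h x y =>
  obtain ⟨hxy, ⟨hx, hy⟩ | ⟨hx, hy⟩⟩ := he
  · exact ⟨x, hx, y, hy, deleteEdges_adj.mpr ⟨hxy, heF⟩⟩
  · exact ⟨y, hy, x, hx, deleteEdges_adj.mpr ⟨hxy.symm, by rwa [Sym2.eq_swap]⟩⟩

namespace IsFDCertificate

lemma refl (G : SimpleGraph V) (f : ℕ) : IsFDCertificate G G f :=
  ⟨le_rfl, fun _ _ _ _ _ => Iff.rfl⟩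

lemma reachable_iff [Finite V] (h : IsFDCertificate G H f) (hF : DegLE F f) (u v : V) :
    (H.deleteEdges F).Reachable u v ↔ (G.deleteEdges F).Reachable u v := by
  rw [← deleteEdges_inter_edgeSet_of_le h.1 F, ← deleteEdges_inter_edgeSet_of_le le_rfl F]
  exact h.2 _ Set.inter_subset_right (hF.mono Set.inter_subset_left) u v

lemma of_adj (hHG : H ≤ G)
    (h : ∀ F, DegLE F f → ∀ u v, (G.deleteEdges F).Adj u v → (H.deleteEdges F).Reachable u v) :
    IsFDCertificate G H f :=
  ⟨hHG, fun F _ hF u v => ⟨fun huv => huv.mono (deleteEdges_mono hHG),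
    fun huv => reachable_le_reachable_of_adj_le (h F hF) u v huv⟩⟩

lemma trans [Finite V] (h₁ : IsFDCertificate G K f) (h₂ : IsFDCertificate K H f) :
    IsFDCertificate G H f :=
  ⟨h₂.1.trans h₁.1, fun _ _ hF u v => (h₂.reachable_iff hF u v).trans (h₁.reachable_iff hF u v)⟩

lemma sup [Finite V] (h₁ : IsFDCertificate G₁ H₁ f) (h₂ : IsFDCertificate G₂ H₂ f) :
    IsFDCertificate (G₁ ⊔ G₂) (H₁ ⊔ H₂) f :=
  of_adj (sup_le_sup h₁.1 h₂.1) fun F hF u v huv => by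
    rw [deleteEdges_sup] at huv ⊢
    rcases huv with huv | huv
    · exact ((h₁.reachable_iff hF u v).2 huv.reachable).mono le_sup_left
    · exact ((h₂.reachable_iff hF u v).2 huv.reachable).mono le_sup_right

lemma of_between [Finite V] (h₁ : IsFDCertificate (G.between S S) H₁ f)
    (h₂ : IsFDCertificate (G.between Sᶜ Sᶜ) H₂ f) :
    IsFDCertificate G (G.between S Sᶜ ⊔ (H₁ ⊔ H₂)) f := by
  simpa only [between_compl_sup_between_sup_between] using
    (refl (G.between S Sᶜ) f).sup (h₁.sup h₂)

end IsFDCertificate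

def SimpleGraph.IsSmallSide (G : SimpleGraph V) (S : Set V) : Prop :=
  S ⊆ G.support ∧ S.Nonempty ∧ 2 * S.ncard ≤ G.support.ncard

theorem isFDCertificate_of_forall_isSmallSide [Finite V] (hHG : H ≤ G)
    (h : ∀ S, G.IsSmallSide S → f * S.ncard < (H.between S Sᶜ).edgeSet.ncard) :
    IsFDCertificate G H f := by
  refine .of_adj hHG fun F hF u v huv => ?_
  have huv' := deleteEdges_le F huv
  refine reachable_of_forall_exists_adj huv'.mem_support_left fun T hTW huT hvT => ?_
  by_cases hT : 2 * T.ncard ≤ G.support.ncard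
  · obtain ⟨x, hx, y, hy, hxy⟩ := hF.exists_adj_of_lt_ncard_between (h T ⟨hTW, ⟨u, huT⟩, hT⟩)
    exact ⟨x, hx, y, ⟨(hHG (deleteEdges_le F hxy)).mem_support_right, hy⟩, hxy⟩
  · have hsmall : G.IsSmallSide (G.support \ T) :=
      ⟨Set.sdiff_subset, ⟨v, huv'.mem_support_right, hvT⟩, by rw [Set.ncard_sdiff hTW]; omega⟩
    obtain ⟨x, hx, y, hy, hxy⟩ := hF.exists_adj_of_lt_ncard_between (h _ hsmall)
    have hyW : y ∈ G.support := (hHG (deleteEdges_le F hxy)).mem_support_right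
    exact ⟨y, by_contra fun hyT => hy ⟨hyW, hyT⟩, x, hx, hxy.symm⟩

theorem isFDCertificate_deleteEdges_singleton [Finite V]
    (hG : ∀ S, G.IsSmallSide S → (f + 1) * S.ncard < (G.between S Sᶜ).edgeSet.ncard)
    (e : Sym2 V) : IsFDCertificate G (G.deleteEdges {e}) f := by
  refine isFDCertificate_of_forall_isSmallSide (deleteEdges_le _) fun S hS => ?_
  have hcut := hG S hS
  have hdel : (G.between S Sᶜ).edgeSet.ncard - 1 ≤
      ((G.deleteEdges {e}).between S Sᶜ).edgeSet.ncard := by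
    rw [deleteEdges_singleton_between, edgeSet_deleteEdges]
    exact Set.pred_ncard_le_ncard_sdiff_singleton _ _
  have hpos : 0 < S.ncard := hS.2.1.ncard_pos
  rw [add_one_mul] at hcut
  omega

lemma mul_log_add_mul_log_le {q s t w : ℕ} (hs : 2 * s ≤ w) (hst : s + t ≤ w) :
    q * s + q * s * Nat.log 2 s + q * t * Nat.log 2 t ≤ q * w * Nat.log 2 w := by
  have hlog_s : s * (Nat.log 2 s + 1) ≤ s * Nat.log 2 w := by
    rcases Nat.eq_zero_or_pos s with rfl | hs0
    · simp
    · rw [← Nat.log_mul_base one_lt_two hs0.ne']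
      gcongr
      omega
  have hlog_t : Nat.log 2 t ≤ Nat.log 2 w := Nat.log_mono_right (by omega)
  calc q * s + q * s * Nat.log 2 s + q * t * Nat.log 2 t
      = q * (s * (Nat.log 2 s + 1)) + q * t * Nat.log 2 t := by ring
    _ ≤ q * (s * Nat.log 2 w) + q * t * Nat.log 2 w := by gcongr
    _ = q * (s + t) * Nat.log 2 w := by ring
    _ ≤ q * w * Nat.log 2 w := by gcongr

lemma ncard_edgeSet_split_le [Finite V] {q : ℕ} (hSW : S ⊆ G.support)
    (hS2 : 2 * S.ncard ≤ G.support.ncard)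
    (hcut : (G.between S Sᶜ).edgeSet.ncard ≤ q * S.ncard)
    (hH₁ : H₁.edgeSet.ncard ≤
      q * (G.between S S).support.ncard * Nat.log 2 (G.between S S).support.ncard)
    (hH₂ : H₂.edgeSet.ncard ≤
      q * (G.between Sᶜ Sᶜ).support.ncard * Nat.log 2 (G.between Sᶜ Sᶜ).support.ncard) :
    (G.between S Sᶜ ⊔ (H₁ ⊔ H₂)).edgeSet.ncard ≤
      q * G.support.ncard * Nat.log 2 G.support.ncard := by
  have hs : (G.between S S).support.ncard ≤ S.ncard :=
    Set.ncard_le_ncard (support_between_self_subset.trans Set.inter_subset_right)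
  have ht : (G.between Sᶜ Sᶜ).support.ncard ≤ (G.support \ S).ncard :=
    Set.ncard_le_ncard support_between_self_subset
  have hst : S.ncard + (G.support \ S).ncard = G.support.ncard := by
    rw [add_comm, Set.ncard_sdiff_add_ncard_of_subset hSW]
  calc (G.between S Sᶜ ⊔ (H₁ ⊔ H₂)).edgeSet.ncard
      ≤ (G.between S Sᶜ).edgeSet.ncard + (H₁.edgeSet.ncard + H₂.edgeSet.ncard) :=
        (ncard_edgeSet_sup_le _ _).trans (by gcongr; exact ncard_edgeSet_sup_le _ _)
    _ ≤ q * S.ncard + (q * S.ncard * Nat.log 2 S.ncard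
          + q * (G.support \ S).ncard * Nat.log 2 (G.support \ S).ncard) := by
        gcongr
        · exact hH₁.trans (by gcongr)
        · exact hH₂.trans (by gcongr)
    _ ≤ q * G.support.ncard * Nat.log 2 G.support.ncard := by
        rw [← add_assoc]
        exact mul_log_add_mul_log_le hS2 hst.le

theorem exists_isFDCertificate_ncard_edgeSet_le [Finite V] (f : ℕ) (G : SimpleGraph V) :
    ∃ H, IsFDCertificate G H f ∧
      H.edgeSet.ncard ≤ (f + 1) * G.support.ncard * Nat.log 2 G.support.ncard := by
  induction G using WellFoundedLT.induction with | ind G ih =>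
  by_cases hexp : ∀ S, G.IsSmallSide S → (f + 1) * S.ncard < (G.between S Sᶜ).edgeSet.ncard
  · obtain hE | ⟨e, he⟩ := G.edgeSet.eq_empty_or_nonempty
    · exact ⟨G, .refl G f, by simp [hE]⟩
    have hlt : G.deleteEdges {e} < G := lt_of_le_of_ne (deleteEdges_le _) fun h =>
      Set.disjoint_singleton_right.mp (deleteEdges_eq_self.mp h) he
    obtain ⟨H, hH, hcard⟩ := ih _ hlt
    refine ⟨H, (isFDCertificate_deleteEdges_singleton hexp e).trans hH, hcard.trans ?_⟩
    have hsupp := Set.ncard_le_ncard (support_mono (deleteEdges_le {e} (G := G)))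
    gcongr
  · push Not at hexp
    obtain ⟨S, ⟨hSW, hSne, hS2⟩, hcut⟩ := hexp
    obtain ⟨v, hvW, hvS⟩ : (G.support \ S).Nonempty := by
      rw [← Set.ncard_pos, Set.ncard_sdiff hSW]
      have := hSne.ncard_pos
      omega
    obtain ⟨u, hu⟩ := hSne
    obtain ⟨H₁, h₁, hH₁⟩ := ih _ (between_self_lt hvW hvS)
    obtain ⟨H₂, h₂, hH₂⟩ := ih _ (between_self_lt (S := Sᶜ) (hSW hu) (not_not_intro hu))
    exact ⟨_, h₁.of_between h₂, ncard_edgeSet_split_le hSW hS2 hcut hH₁ hH₂⟩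

end

lemma natLog_two_le_mul_log (n : ℕ) : (Nat.log 2 n : ℝ) ≤ 3 / 2 * Real.log n := by
  have hlog2 : 2 / 3 < Real.log 2 := by linarith [Real.log_two_gt_d9]
  calc (Nat.log 2 n : ℝ) ≤ Real.logb 2 n := by exact_mod_cast Real.natLog_le_logb n 2
    _ = Real.log n / Real.log 2 := rfl
    _ ≤ 3 / 2 * Real.log n := by
        rw [div_le_iff₀ (by linarith)]
        nlinarith [Real.log_natCast_nonneg n]

/-- There are absolute constants `C, c > 0` such that every `n`-vertex graph
has an `f`-FD connectivity certificate with at most `C·f·n·(log n)^c` edges. -/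
theorem fd_certificate_exists :
    ∃ C c : ℝ, 0 < C ∧ 0 < c ∧
      ∀ (n f : ℕ), 0 < n → 0 < f →
        ∀ (V : Type) [Fintype V], Fintype.card V = n →
          ∀ G : SimpleGraph V,
            ∃ H : SimpleGraph V,
              IsFDCertificate G H f ∧
              (H.edgeSet.ncard : ℝ) ≤ C * f * n * Real.log n ^ c := by
  refine ⟨3, 1, by norm_num, by norm_num, fun n f _ hf V _ hV G => ?_⟩
  obtain ⟨H, hH, hcard⟩ := exists_isFDCertificate_ncard_edgeSet_le f G
  have hW : G.support.ncard ≤ n := by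
    simpa only [Nat.card_eq_fintype_card, hV] using Set.ncard_le_card G.support
  have hcard' : H.edgeSet.ncard ≤ (f + 1) * n * Nat.log 2 n := hcard.trans (by gcongr)
  have hf' : (f : ℝ) + 1 ≤ 2 * f := by
    have : (1 : ℝ) ≤ f := by exact_mod_cast hf
    linarith
  refine ⟨H, hH, ?_⟩
  rw [Real.rpow_one]
  calc (H.edgeSet.ncard : ℝ) ≤ (f + 1) * n * Nat.log 2 n := by exact_mod_cast hcard'
    _ ≤ (2 * f) * n * (3 / 2 * Real.log n) := by
        gcongr
        exact natLog_two_le_mul_log n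
    _ = 3 * f * n * Real.log n := by ring
end

section
/- Let G be an n-vertex graph with minimum degree f' and conductance Φ(G) ≥ φ, where f' ≥ 2f/φ and φ > 0. Then for every f-degree fault set F, the graph G \ F has conductance at least φ/2 (it is a φ/2-expander), where the conductance of G \ F is computed with respect to its own degrees; in particular, G \ F is connected. -/
open SimpleGraph

/-- The volume of a vertex set `S`: the sum of the degrees (in `G`) of the vertices of `S`. -/
noncomputable def vol {V : Type} (G : SimpleGraph V) (S : Finset V) : ℕ :=
  ∑ v ∈ S, (G.neighborSet v).ncard

/-- The set of edges of `G` with exactly one endpoint in `S`. -/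
def edgeBoundary {V : Type} (G : SimpleGraph V) (S : Finset V) : Set (Sym2 V) :=
  {e | e ∈ G.edgeSet ∧ ∃ u v : V, e = s(u, v) ∧ u ∈ S ∧ v ∉ S}

/-- The conductance of the cut `S` in `G`. -/
noncomputable def cutConductance {V : Type} [Fintype V] [DecidableEq V]
    (G : SimpleGraph V) (S : Finset V) : ℝ :=
  (edgeBoundary G S).ncard / (min (vol G S) (vol G Sᶜ) : ℕ)

/-- `G` is a `φ`-expander: every nonempty proper cut has conductance at least `φ`. -/
def IsExpander {V : Type} [Fintype V] [DecidableEq V] (G : SimpleGraph V) (φ : ℝ) : Prop :=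
  ∀ S : Finset V, S.Nonempty → S ≠ Finset.univ → φ ≤ cutConductance G S

/-!
Deleting `F` removes at most `f` boundary edges per vertex of a cut `S`, so at most `f |S|`
boundary edges, while minimum degree `f' ≥ 2f/φ` gives `f |S| ≤ (φ/2) vol S`. As the boundary
is shared by `S` and `Sᶜ`, at most `(φ/2) min (vol S, vol Sᶜ)` boundary edges are lost: half of
the `φ min (vol S, vol Sᶜ)` guaranteed by expansion.
Volumes only shrink under deletion, so every cut of `G \ F` still has conductance `≥ φ/2`,
and a positive-conductance graph has no cut with empty boundary, i.e. is connected.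
-/

section Boundary

variable {V : Type}

lemma ncard_incidenceSet (G : SimpleGraph V) (v : V) :
    (G.incidenceSet v).ncard = (G.neighborSet v).ncard := by
  classical
  simp only [← Nat.card_coe_set_eq]
  exact Nat.card_congr (G.incidenceSetEquivNeighborSet v)

lemma edgeBoundary_deleteEdges (G : SimpleGraph V) (F : Set (Sym2 V)) (S : Finset V) :
    edgeBoundary (G.deleteEdges F) S = edgeBoundary G S \ F := by
  ext e
  simp only [edgeBoundary, edgeSet_deleteEdges, Set.mem_sdiff, Set.mem_ofPred_eq]
  tauto

lemma edgeBoundary_compl [Fintype V] [DecidableEq V] (G : SimpleGraph V) (S : Finset V) :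
    edgeBoundary G Sᶜ = edgeBoundary G S := by
  have swap : ∀ T : Finset V, edgeBoundary G T ⊆ edgeBoundary G Tᶜ := by
    rintro T e ⟨he, u, v, rfl, hu, hv⟩
    exact ⟨he, v, u, Sym2.eq_swap, Finset.mem_compl.mpr hv, by simpa using hu⟩
  exact (by simpa using swap Sᶜ : edgeBoundary G Sᶜ ⊆ edgeBoundary G S).antisymm (swap S)

variable [Finite V]

lemma ncard_edgeBoundary_le_vol (G : SimpleGraph V) (S : Finset V) :
    (edgeBoundary G S).ncard ≤ vol G S := by
  have hsub : edgeBoundary G S ⊆ ⋃ v ∈ S, G.incidenceSet v := by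
    rintro e ⟨he, u, v, rfl, hu, -⟩
    exact Set.mem_biUnion hu ⟨he, Sym2.mem_mk_left u v⟩
  calc (edgeBoundary G S).ncard ≤ (⋃ v ∈ S, G.incidenceSet v).ncard := Set.ncard_le_ncard hsub
    _ ≤ ∑ v ∈ S, (G.incidenceSet v).ncard := S.set_ncard_biUnion_le _
    _ = vol G S := Finset.sum_congr rfl fun v _ => ncard_incidenceSet G v

lemma ncard_edgeBoundary_inter_le {F : Set (Sym2 V)} {f : ℕ} (hF : DegLE F f)
    (G : SimpleGraph V) (S : Finset V) :
    (edgeBoundary G S ∩ F).ncard ≤ f * S.card := by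
  have hsub : edgeBoundary G S ∩ F ⊆ ⋃ v ∈ S, {e ∈ F | v ∈ e} := by
    rintro e ⟨⟨-, u, v, rfl, hu, -⟩, heF⟩
    exact Set.mem_biUnion hu ⟨heF, Sym2.mem_mk_left u v⟩
  calc (edgeBoundary G S ∩ F).ncard ≤ (⋃ v ∈ S, {e ∈ F | v ∈ e}).ncard :=
        Set.ncard_le_ncard hsub
    _ ≤ ∑ v ∈ S, {e ∈ F | v ∈ e}.ncard := S.set_ncard_biUnion_le _
    _ ≤ ∑ _v ∈ S, f := Finset.sum_le_sum fun v _ => hF v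
    _ = f * S.card := by rw [Finset.sum_const, smul_eq_mul, mul_comm]

lemma vol_deleteEdges_le (G : SimpleGraph V) (F : Set (Sym2 V)) (S : Finset V) :
    vol (G.deleteEdges F) S ≤ vol G S :=
  Finset.sum_le_sum fun _ _ => Set.ncard_le_ncard fun _ hx => (deleteEdges_adj.mp hx).1

end Boundary

lemma mul_card_le_vol {V : Type} {G : SimpleGraph V} {d : ℕ}
    (hd : ∀ v, d ≤ (G.neighborSet v).ncard) (S : Finset V) : d * S.card ≤ vol G S :=
  calc d * S.card = ∑ _v ∈ S, d := by rw [Finset.sum_const, smul_eq_mul, mul_comm]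
    _ ≤ vol G S := Finset.sum_le_sum fun v _ => hd v

section Conductance

variable {V : Type} [Fintype V] [DecidableEq V]

lemma ncard_edgeBoundary_le_min_vol (G : SimpleGraph V) (S : Finset V) :
    (edgeBoundary G S).ncard ≤ min (vol G S) (vol G Sᶜ) :=
  le_min (ncard_edgeBoundary_le_vol G S)
    (edgeBoundary_compl G S ▸ ncard_edgeBoundary_le_vol G Sᶜ)

/-- Positivity of `min (vol S) (vol Sᶜ)` is part of the conclusion because `x / 0 = 0`. -/
lemma le_cutConductance_iff {G : SimpleGraph V} {S : Finset V} {φ : ℝ} (hφ : 0 < φ) :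
    φ ≤ cutConductance G S ↔ 0 < min (vol G S) (vol G Sᶜ) ∧
      φ * min (vol G S) (vol G Sᶜ) ≤ (edgeBoundary G S).ncard := by
  rw [cutConductance]
  constructor
  · intro h
    have hpos : 0 < min (vol G S) (vol G Sᶜ) := by
      by_contra! h0
      rw [Nat.le_zero.mp h0, Nat.cast_zero, div_zero] at h
      exact hφ.not_ge h
    exact ⟨hpos, (le_div_iff₀ (by exact_mod_cast hpos)).mp h⟩
  · rintro ⟨hpos, h⟩
    exact (le_div_iff₀ (by exact_mod_cast hpos)).mpr h

lemma two_mul_ncard_edgeBoundary_inter_le {G : SimpleGraph V} {F : Set (Sym2 V)} {f d : ℕ}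
    {φ : ℝ} (hφ : 0 ≤ φ) (hfd : 2 * (f : ℝ) ≤ φ * d)
    (hd : ∀ v, d ≤ (G.neighborSet v).ncard) (hF : DegLE F f) (S : Finset V) :
    2 * ((edgeBoundary G S ∩ F).ncard : ℝ) ≤ φ * (min (vol G S) (vol G Sᶜ) : ℕ) := by
  have side : ∀ T : Finset V, 2 * ((edgeBoundary G T ∩ F).ncard : ℝ) ≤ φ * vol G T := by
    intro T
    have hT : ((edgeBoundary G T ∩ F).ncard : ℝ) ≤ f * T.card := by
      exact_mod_cast ncard_edgeBoundary_inter_le hF G T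
    have hvol : (d : ℝ) * T.card ≤ vol G T := by exact_mod_cast mul_card_le_vol hd T
    calc 2 * ((edgeBoundary G T ∩ F).ncard : ℝ) ≤ 2 * f * T.card := by linarith
      _ ≤ φ * d * T.card := by gcongr
      _ ≤ φ * vol G T := by rw [mul_assoc]; gcongr
  have hcompl := side Sᶜ
  rw [edgeBoundary_compl] at hcompl
  rw [Nat.cast_min, mul_min_of_nonneg _ _ hφ]
  exact le_min (side S) hcompl

theorem IsExpander.deleteEdges {G : SimpleGraph V} {F : Set (Sym2 V)} {f d : ℕ} {φ : ℝ}
    (hG : IsExpander G φ) (hφ : 0 < φ) (hfd : 2 * (f : ℝ) ≤ φ * d)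
    (hd : ∀ v, d ≤ (G.neighborSet v).ncard) (hF : DegLE F f) :
    IsExpander (G.deleteEdges F) (φ / 2) := by
  intro S hS hSuniv
  set H := G.deleteEdges F
  obtain ⟨hminG, hcutG⟩ := (le_cutConductance_iff hφ).mp (hG S hS hSuniv)
  have hsplit : ((edgeBoundary G S).ncard : ℝ) =
      (edgeBoundary G S ∩ F).ncard + (edgeBoundary H S).ncard := by
    rw [edgeBoundary_deleteEdges]
    exact_mod_cast (Set.ncard_inter_add_ncard_sdiff_eq_ncard _ _).symm
  have hcutH : φ / 2 * (min (vol G S) (vol G Sᶜ) : ℕ) ≤ (edgeBoundary H S).ncard := by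
    linarith [two_mul_ncard_edgeBoundary_inter_le hφ.le hfd hd hF S]
  have hminHG : min (vol H S) (vol H Sᶜ) ≤ min (vol G S) (vol G Sᶜ) :=
    min_le_min (vol_deleteEdges_le G F S) (vol_deleteEdges_le G F Sᶜ)
  have hboundaryH : 0 < (edgeBoundary H S).ncard := by
    have : (0 : ℝ) < φ / 2 * (min (vol G S) (vol G Sᶜ) : ℕ) :=
      mul_pos (half_pos hφ) (by exact_mod_cast hminG)
    exact_mod_cast this.trans_le hcutH
  refine (le_cutConductance_iff (half_pos hφ)).mpr
    ⟨hboundaryH.trans_le (ncard_edgeBoundary_le_min_vol H S), ?_⟩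
  calc φ / 2 * (min (vol H S) (vol H Sᶜ) : ℕ)
      ≤ φ / 2 * (min (vol G S) (vol G Sᶜ) : ℕ) := by gcongr
    _ ≤ _ := hcutH

theorem IsExpander.connected [Nonempty V] {G : SimpleGraph V} {φ : ℝ} (hG : IsExpander G φ)
    (hφ : 0 < φ) : G.Connected := by
  classical
  refine (connected_iff G).mpr ⟨fun u v => ?_, inferInstance⟩
  by_contra huv
  let S : Finset V := {w | G.Reachable u w}
  have hu : u ∈ S := by simp [S]
  have hSuniv : S ≠ Finset.univ := by
    intro h
    have hv : v ∈ S := h ▸ Finset.mem_univ v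
    exact huv (by simpa [S] using hv)
  have hempty : edgeBoundary G S = ∅ := by
    refine Set.eq_empty_iff_forall_notMem.mpr ?_
    rintro e ⟨he, a, b, rfl, ha, hb⟩
    simp only [S, Finset.mem_filter, Finset.mem_univ, true_and] at ha hb
    exact hb (ha.trans (G.mem_edgeSet.mp he).reachable)
  obtain ⟨hpos, hcut⟩ := (le_cutConductance_iff hφ).mp (hG S ⟨u, hu⟩ hSuniv)
  rw [hempty, Set.ncard_empty, Nat.cast_zero] at hcut
  have : (0 : ℝ) < φ * (min (vol G S) (vol G Sᶜ) : ℕ) := mul_pos hφ (by exact_mod_cast hpos)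
  linarith

end Conductance

theorem expander_rigid_to_bounded_degree_faults_general {V : Type} [Fintype V] [DecidableEq V]
    [Nonempty V] (G : SimpleGraph V) (φ : ℝ) (f f' : ℕ)
    (hφ : 0 < φ)
    (hf' : 2 * (f : ℝ) / φ ≤ f')
    (hmindeg : ∀ v : V, f' ≤ (G.neighborSet v).ncard)
    (hexp : IsExpander G φ)
    (F : Set (Sym2 V)) (hdeg : DegLE F f) :
    IsExpander (G.deleteEdges F) (φ / 2) ∧ (G.deleteEdges F).Connected := by
  have hfd : 2 * (f : ℝ) ≤ φ * f' := by
    linarith [(div_le_iff₀ hφ).mp hf']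
  have hexpH := hexp.deleteEdges hφ hfd hmindeg hdeg
  exact ⟨hexpH, hexpH.connected (half_pos hφ)⟩

/-- A `φ`-expander with minimum degree `f' ≥ 2f/φ` remains a
`φ/2`-expander (in particular, stays connected) after deleting any `f`-degree fault set. -/
theorem expander_rigid_to_bounded_degree_faults {V : Type} [Fintype V] [DecidableEq V]
    [Nonempty V] (G : SimpleGraph V) (φ : ℝ) (f f' : ℕ)
    (hφ : 0 < φ)
    (hf' : 2 * (f : ℝ) / φ ≤ f')
    (hmindeg : ∀ v : V, f' ≤ (G.neighborSet v).ncard)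
    (hexp : IsExpander G φ)
    (F : Set (Sym2 V)) (hF : F ⊆ G.edgeSet) (hdeg : DegLE F f) :
    IsExpander (G.deleteEdges F) (φ / 2) ∧ (G.deleteEdges F).Connected :=
  expander_rigid_to_bounded_degree_faults_general G φ f f' hφ hf' hmindeg hexp F hdeg
end

section
/- Let G be a connected n-vertex graph with minimum degree f', let F be an f-degree fault set, and set d = f'/f. Suppose F is d-routable in G with congestion c < d (and any dilation). Then G \ F is connected; moreover, for every edge (u,v) ∈ F there is a path from u to v in G \ F. -/
open SimpleGraph

/-- A `d`-routing of an edge set `F` in `G`: each edge `e = (u,v)` of `F` is assigned a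
multiset of exactly `d` walks in `G` from `u` to `v`. -/
structure DRouting {V : Type} (G : SimpleGraph V) (F : Finset (Sym2 V)) (d : ℕ) where
  src : Sym2 V → V
  dst : Sym2 V → V
  endpoint_eq : ∀ e ∈ F, e = s(src e, dst e)
  walks : (e : Sym2 V) → Multiset (G.Walk (src e) (dst e))
  card_walks : ∀ e ∈ F, Multiset.card (walks e) = d

/-- The routing has congestion at most `c`: every edge of `G` is traversed by at most `c`
of the assigned walks (counted with multiplicity over all of `F`). -/
def DRouting.CongestionLE {V : Type} [DecidableEq V] {G : SimpleGraph V}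
    {F : Finset (Sym2 V)} {d : ℕ} (R : DRouting G F d) (c : ℕ) : Prop :=
  ∀ e' : Sym2 V, (∑ e ∈ F, Multiset.countP (fun w => e' ∈ w.edges) (R.walks e)) ≤ c

/-- The routing has dilation at most `ℓ`: every assigned walk has at most `ℓ` edges. -/
def DRouting.DilationLE {V : Type} {G : SimpleGraph V}
    {F : Finset (Sym2 V)} {d : ℕ} (R : DRouting G F d) (ℓ : ℕ) : Prop :=
  ∀ e ∈ F, ∀ w ∈ R.walks e, w.length ≤ ℓ

lemma my_countP_le_sum {α β : Type*} (m : Multiset α) (s : Finset β)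
    (p : α → Prop) [DecidablePred p] (q : β → α → Prop) [∀ b, DecidablePred (q b)]
    (h : ∀ a ∈ m, p a → ∃ b ∈ s, q b a) :
    Multiset.countP p m ≤ ∑ b ∈ s, Multiset.countP (q b) m := by
  induction m using Multiset.induction with
  | empty => simp
  | cons a m ih =>
    have h1 := ih (fun a ha hp => h a (Multiset.mem_cons_of_mem ha) hp)
    simp only [Multiset.countP_cons, Finset.sum_add_distrib]
    by_cases hpa : p a
    · obtain ⟨b, hb, hq⟩ := h a (Multiset.mem_cons_self a m) hpa
      have h2 : 1 ≤ ∑ b ∈ s, ite (q b a) 1 0 := by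
        calc (1 : ℕ) = ite (q b a) 1 0 := by simp [hq]
        _ ≤ _ := Finset.single_le_sum (f := fun b => ite (q b a) 1 0)
            (fun _ _ => Nat.zero_le _) hb
      simp only [hpa, if_true]
      omega
    · simp only [hpa, if_false]
      omega

lemma my_exists_cross_edge {V : Type} {G : SimpleGraph V} (S : Set V) :
    ∀ {x y : V} (w : G.Walk x y), x ∈ S → y ∉ S →
      ∃ a b, s(a, b) ∈ w.edges ∧ a ∈ S ∧ b ∉ S := by
  intro x y w
  induction w with
  | nil => intro hx hy; exact absurd hx hy
  | @cons x z y h p ih =>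
    intro hx hy
    by_cases hz : z ∈ S
    · obtain ⟨a, b, hm, ha, hb⟩ := ih hz hy
      exact ⟨a, b, by simp [hm], ha, hb⟩
    · exact ⟨x, z, by simp, hx, hz⟩

/-- If `G` is connected with minimum degree `f'`, `F` is an `f`-degree
fault set which is `d`-routable in `G` with congestion `c < d` where `d = f'/f`, then
`G \ F` is connected; moreover the endpoints of every edge of `F` are joined by a path
in `G \ F`. -/
theorem routable_fault_set_keeps_connected {V : Type} [Fintype V] [DecidableEq V]
    (G : SimpleGraph V) (hconn : G.Connected)
    (f f' d c : ℕ) (hf : 0 < f)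
    (hmindeg : ∀ v : V, f' ≤ (G.neighborSet v).ncard)
    (hd : d = f' / f)
    (F : Finset (Sym2 V)) (hF : (F : Set (Sym2 V)) ⊆ G.edgeSet) (hdeg : DegLE (F : Set (Sym2 V)) f)
    (R : DRouting G F d) (hcong : R.CongestionLE c) (hcd : c < d) :
    (G.deleteEdges (F : Set (Sym2 V))).Connected ∧
      ∀ e ∈ F, ∀ u v : V, e = s(u, v) → (G.deleteEdges (F : Set (Sym2 V))).Reachable u v := by
  classical
  set H := G.deleteEdges (F : Set (Sym2 V)) with hH
  have key : ∀ e ∈ F, ∀ u v : V, e = s(u, v) → H.Reachable u v := by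
    intro e he u v hev
    by_contra hnr
    set S : Set V := {w | H.Reachable u w} with hS
    have hu : u ∈ S := SimpleGraph.Reachable.refl u
    have hv : v ∉ S := hnr
    have hclose : ∀ a b : V, a ∈ S → G.Adj a b → s(a, b) ∉ (F : Set (Sym2 V)) → b ∈ S := by
      intro a b ha hab hnF
      refine SimpleGraph.Reachable.trans ha (SimpleGraph.Adj.reachable ?_)
      rw [hH, SimpleGraph.deleteEdges_adj]
      exact ⟨hab, hnF⟩
    have hBF : ∀ a b : V, a ∈ S → b ∉ S → s(a, b) ∈ G.edgeSet → s(a, b) ∈ F := by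
      intro a b ha hb he'
      by_contra hn
      exact hb (hclose a b ha ((SimpleGraph.mem_edgeSet G).1 he') (by simpa using hn))
    set C : Finset (Sym2 V) :=
      F.filter (fun e' => ∃ a b, e' = s(a, b) ∧ a ∈ S ∧ b ∉ S) with hC
    have heC : e ∈ C := Finset.mem_filter.2 ⟨he, u, v, hev, hu, hv⟩
    -- every walk assigned to an edge of C crosses the cut
    have hlow : ∀ e' ∈ C, Multiset.countP
        (fun w : G.Walk (R.src e') (R.dst e') =>
          ∃ a b, s(a, b) ∈ w.edges ∧ a ∈ S ∧ b ∉ S) (R.walks e') = d := by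
      intro e' he'
      obtain ⟨heF, a, b, hab, ha, hb⟩ := Finset.mem_filter.1 he'
      have hend := Sym2.eq_iff.mp (hab.symm.trans (R.endpoint_eq e' heF))
      have hcross : ∀ w ∈ R.walks e', ∃ a b, s(a, b) ∈ w.edges ∧ a ∈ S ∧ b ∉ S := by
        intro w _
        rcases hend with ⟨h1, h2⟩ | ⟨h1, h2⟩
        · exact my_exists_cross_edge S w (h1 ▸ ha) (h2 ▸ hb)
        · obtain ⟨a', b', hm, ha', hb'⟩ :=
            my_exists_cross_edge S w.reverse (h1 ▸ ha) (h2 ▸ hb)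
          exact ⟨a', b', by simpa using hm, ha', hb'⟩
      rw [Multiset.countP_eq_card.2 hcross]
      exact R.card_walks e' heF
    have hstep : ∀ e'' ∈ F, Multiset.countP
        (fun w : G.Walk (R.src e'') (R.dst e'') =>
          ∃ a b, s(a, b) ∈ w.edges ∧ a ∈ S ∧ b ∉ S) (R.walks e'')
        ≤ ∑ e' ∈ C, Multiset.countP (fun w => e' ∈ w.edges) (R.walks e'') := by
      intro e'' _
      refine my_countP_le_sum _ _ _ _ ?_
      rintro w _ ⟨a, b, hm, ha, hb⟩
      have hGe : s(a, b) ∈ G.edgeSet := w.edges_subset_edgeSet hm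
      refine ⟨s(a, b), Finset.mem_filter.2 ⟨hBF a b ha hb hGe, a, b, rfl, ha, hb⟩, hm⟩
    have hCpos : 0 < C.card := Finset.card_pos.2 ⟨e, heC⟩
    have hchain : d * C.card ≤ c * C.card := by
      calc d * C.card = ∑ e' ∈ C, d := by rw [Finset.sum_const, smul_eq_mul, mul_comm]
        _ = ∑ e' ∈ C, Multiset.countP
            (fun w : G.Walk (R.src e') (R.dst e') =>
              ∃ a b, s(a, b) ∈ w.edges ∧ a ∈ S ∧ b ∉ S) (R.walks e') :=
          (Finset.sum_congr rfl (fun e' he' => (hlow e' he').symm))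
        _ ≤ ∑ e' ∈ F, Multiset.countP
            (fun w : G.Walk (R.src e') (R.dst e') =>
              ∃ a b, s(a, b) ∈ w.edges ∧ a ∈ S ∧ b ∉ S) (R.walks e') :=
          Finset.sum_le_sum_of_subset (Finset.filter_subset _ _)
        _ ≤ ∑ e'' ∈ F, ∑ e' ∈ C,
            Multiset.countP (fun w => e' ∈ w.edges) (R.walks e'') :=
          Finset.sum_le_sum hstep
        _ = ∑ e' ∈ C, ∑ e'' ∈ F,
            Multiset.countP (fun w => e' ∈ w.edges) (R.walks e'') := Finset.sum_comm
        _ ≤ ∑ e' ∈ C, c := Finset.sum_le_sum (fun e' _ => hcong e')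
        _ = c * C.card := by rw [Finset.sum_const, smul_eq_mul, mul_comm]
    have : d ≤ c := Nat.le_of_mul_le_mul_right hchain hCpos
    omega
  have hpre : ∀ x y : V, G.Reachable x y → H.Reachable x y := by
    intro x y hxy
    obtain ⟨w⟩ := hxy
    induction w with
    | nil => exact SimpleGraph.Reachable.refl _
    | @cons x z y h p ih =>
      refine SimpleGraph.Reachable.trans ?_ ih
      by_cases hm : s(x, z) ∈ F
      · exact key _ hm x z rfl
      · exact SimpleGraph.Adj.reachable
          (by rw [hH, SimpleGraph.deleteEdges_adj]; exact ⟨h, by simpa using hm⟩)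
  have : Nonempty V := hconn.nonempty
  exact ⟨⟨fun x y => hpre x y (hconn.preconnected x y)⟩, key⟩
end

section
/- Let G be an n-vertex graph and let F ⊆ E(G) be such that F is d-routable in G with congestion c < d and dilation ℓ. Then for every edge (u,v) ∈ F, dist_{G\F}(u,v) ≤ ℓ^k, where k = ⌈2·log n / log(d/c)⌉ and dist denotes unweighted shortest-path distance. -/
open SimpleGraph

section Aux

variable {V : Type} [DecidableEq V] {G : SimpleGraph V} {F : Finset (Sym2 V)} {d : ℕ}

/-- Level-`k` "badness" potential of an edge. -/
noncomputable def Bfun (R : DRouting G F d) : ℕ → Sym2 V → ℝ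
  | 0, _ => 1
  | (k+1), e => (d : ℝ)⁻¹ *
      ((R.walks e).map
        (fun w => ∑ f ∈ F, (if f ∈ w.edges then Bfun R k f else 0))).sum

lemma Bfun_zero (R : DRouting G F d) (e : Sym2 V) : Bfun R 0 e = 1 := rfl

lemma Bfun_succ (R : DRouting G F d) (k : ℕ) (e : Sym2 V) :
    Bfun R (k+1) e = (d : ℝ)⁻¹ *
      ((R.walks e).map
        (fun w => ∑ f ∈ F, (if f ∈ w.edges then Bfun R k f else 0))).sum := rfl

lemma multiset_sum_map_ite {α : Type*} (M : Multiset α) (p : α → Prop) [DecidablePred p]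
    (x : ℝ) : (M.map (fun a => if p a then x else 0)).sum = (M.countP p : ℝ) * x := by
  induction M using Multiset.induction with
  | empty => simp
  | cons a s ih =>
    by_cases h : p a <;> simp [h, ih, Multiset.countP_cons, add_mul] <;> ring

lemma multiset_map_sum_comm {α β : Type*} (M : Multiset α) (s : Finset β) (g : β → α → ℝ) :
    (M.map (fun w => ∑ f ∈ s, g f w)).sum = ∑ f ∈ s, (M.map (g f)).sum := by
  induction M using Multiset.induction with
  | empty => simp
  | cons a t ih => simp [ih, Finset.sum_add_distrib]

lemma Bfun_nonneg (R : DRouting G F d) : ∀ k e, 0 ≤ Bfun R k e := by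
  intro k
  induction k with
  | zero => intro e; simp [Bfun]
  | succ k ih =>
    intro e
    rw [Bfun_succ]
    apply mul_nonneg (by positivity)
    apply Multiset.sum_nonneg
    intro x hx
    obtain ⟨w, _, rfl⟩ := Multiset.mem_map.mp hx
    exact Finset.sum_nonneg fun f _ => by
      split <;> simp [ih]

lemma Bfun_sum_step (R : DRouting G F d) {c : ℕ} (hcong : R.CongestionLE c)
    (hd : 0 < d) (k : ℕ) :
    ∑ e ∈ F, Bfun R (k+1) e ≤ ((c : ℝ)/d) * ∑ e ∈ F, Bfun R k e := by
  have key : ∀ e, Bfun R (k+1) e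
      = (d : ℝ)⁻¹ * ∑ f ∈ F, ((R.walks e).countP (fun w => f ∈ w.edges) : ℝ) * Bfun R k f := by
    intro e
    rw [Bfun_succ, multiset_map_sum_comm]
    congr 1
    refine Finset.sum_congr rfl fun f _ => ?_
    exact multiset_sum_map_ite (R.walks e) (fun w => f ∈ w.edges) (Bfun R k f)
  calc ∑ e ∈ F, Bfun R (k+1) e
      = (d : ℝ)⁻¹ * ∑ f ∈ F, (∑ e ∈ F, ((R.walks e).countP (fun w => f ∈ w.edges) : ℕ) : ℝ)
          * Bfun R k f := by
        simp only [key, ← Finset.mul_sum]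
        rw [Finset.sum_comm]
        congr 1
        refine Finset.sum_congr rfl fun f _ => ?_
        rw [← Finset.sum_mul]
    _ ≤ (d : ℝ)⁻¹ * ∑ f ∈ F, (c : ℝ) * Bfun R k f := by
        apply mul_le_mul_of_nonneg_left _ (by positivity)
        refine Finset.sum_le_sum fun f _ => ?_
        refine mul_le_mul_of_nonneg_right ?_ (Bfun_nonneg R k f)
        exact_mod_cast hcong f
    _ = ((c : ℝ)/d) * ∑ e ∈ F, Bfun R k e := by
        rw [← Finset.mul_sum]; ring

lemma Bfun_sum_le (R : DRouting G F d) {c : ℕ} (hcong : R.CongestionLE c)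
    (hd : 0 < d) (k : ℕ) :
    ∑ e ∈ F, Bfun R k e ≤ ((c : ℝ)/d) ^ k * F.card := by
  induction k with
  | zero => simp [Bfun]
  | succ k ih =>
    calc ∑ e ∈ F, Bfun R (k+1) e ≤ ((c : ℝ)/d) * ∑ e ∈ F, Bfun R k e :=
          Bfun_sum_step R hcong hd k
      _ ≤ ((c : ℝ)/d) * (((c : ℝ)/d) ^ k * F.card) := by
          apply mul_le_mul_of_nonneg_left ih (by positivity)
      _ = ((c : ℝ)/d) ^ (k+1) * F.card := by ring

/-- Replace each edge of a walk by a short walk in another graph. -/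
lemma walk_replace {G' : SimpleGraph V} {u v : V} (w : G.Walk u v) (L : ℕ)
    (h : ∀ x y : V, s(x, y) ∈ w.edges → ∃ q : G'.Walk x y, q.length ≤ L) :
    ∃ p : G'.Walk u v, p.length ≤ L * w.length := by
  induction w with
  | nil => exact ⟨SimpleGraph.Walk.nil, by simp⟩
  | @cons a b c hab w ih =>
    obtain ⟨q, hq⟩ := h a b (by simp)
    obtain ⟨p, hp⟩ := ih fun x y hxy => h x y (by simp [hxy])
    refine ⟨q.append p, ?_⟩
    rw [SimpleGraph.Walk.length_append, SimpleGraph.Walk.length_cons]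
    calc q.length + p.length ≤ L + L * w.length := Nat.add_le_add hq hp
      _ = L * (w.length + 1) := by ring

lemma good_walk (R : DRouting G F d) {ℓ : ℕ}
    (hF : (F : Set (Sym2 V)) ⊆ G.edgeSet) (hdil : R.DilationLE ℓ) (hd : 0 < d) :
    ∀ k, ∀ e ∈ F, Bfun R k e < 1 →
      ∃ p : (G.deleteEdges (F : Set (Sym2 V))).Walk (R.src e) (R.dst e),
        p.length ≤ ℓ ^ k := by
  intro k
  induction k with
  | zero => intro e he h; simp [Bfun] at h
  | succ k ih =>
    intro e he h
    -- find a walk with small badness sum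
    have hcard : Multiset.card (R.walks e) = d := R.card_walks e he
    have hdR : (0:ℝ) < d := by exact_mod_cast hd
    have hsum : ((R.walks e).map
        (fun w => ∑ f ∈ F, (if f ∈ w.edges then Bfun R k f else 0))).sum < d := by
      have hB : (d : ℝ)⁻¹ *
          ((R.walks e).map (fun w => ∑ f ∈ F, (if f ∈ w.edges then Bfun R k f else 0))).sum
          < 1 := by
        have h' := h
        rw [Bfun_succ] at h'
        exact h'
      calc ((R.walks e).map (fun w => ∑ f ∈ F, (if f ∈ w.edges then Bfun R k f else 0))).sum
          = (d:ℝ) * ((d : ℝ)⁻¹ *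
            ((R.walks e).map (fun w => ∑ f ∈ F, (if f ∈ w.edges then Bfun R k f else 0))).sum)
            := by field_simp
        _ < (d:ℝ) * 1 := mul_lt_mul_of_pos_left hB hdR
        _ = d := mul_one _
    obtain ⟨w, hw, hwlt⟩ : ∃ w ∈ R.walks e,
        (∑ f ∈ F, (if f ∈ w.edges then Bfun R k f else 0)) < 1 := by
      by_contra hcon
      push_neg at hcon
      have hle : (Multiset.card ((R.walks e).map
          (fun w => ∑ f ∈ F, (if f ∈ w.edges then Bfun R k f else 0)))) • (1:ℝ)
          ≤ ((R.walks e).map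
          (fun w => ∑ f ∈ F, (if f ∈ w.edges then Bfun R k f else 0))).sum := by
        apply Multiset.card_nsmul_le_sum
        intro x hx
        obtain ⟨w, hw, rfl⟩ := Multiset.mem_map.mp hx
        exact hcon w hw
      rw [Multiset.card_map, hcard] at hle
      simp only [nsmul_eq_mul, mul_one] at hle
      exact absurd hsum (not_lt.mpr hle)
    -- endpoints of e are distinct, so ℓ ≥ 1
    have hee : e = s(R.src e, R.dst e) := R.endpoint_eq e he
    have hadj : G.Adj (R.src e) (R.dst e) := by
      have := hF he; rw [hee] at this; exact this
    have hℓ1 : 1 ≤ ℓ := by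
      have h1 : w.length ≤ ℓ := hdil e he w hw
      rcases Nat.eq_zero_or_pos w.length with h0 | h0
      · exact absurd (SimpleGraph.Walk.eq_of_length_eq_zero h0) hadj.ne
      · omega
    have hℓk : 1 ≤ ℓ ^ k := Nat.one_le_pow _ _ hℓ1
    -- each F-edge on w has small badness
    have hsmall : ∀ f ∈ F, f ∈ w.edges → Bfun R k f < 1 := by
      intro f hf hfw
      have := Finset.single_le_sum
        (f := fun f => if f ∈ w.edges then Bfun R k f else 0)
        (fun g _ => by by_cases hg : g ∈ w.edges <;> simp [hg, Bfun_nonneg]) hf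
      simp only [hfw, if_true] at this
      exact lt_of_le_of_lt this hwlt
    -- replace each edge of w
    have hrep : ∀ x y : V, s(x, y) ∈ w.edges →
        ∃ q : (G.deleteEdges (F : Set (Sym2 V))).Walk x y, q.length ≤ ℓ ^ k := by
      intro x y hxy
      by_cases hxyF : s(x, y) ∈ F
      · obtain ⟨q, hq⟩ := ih _ hxyF (hsmall _ hxyF hxy)
        have heq : s(R.src s(x,y), R.dst s(x,y)) = s(x, y) :=
          (R.endpoint_eq _ hxyF).symm
        rw [Sym2.eq_iff] at heq
        rcases heq with ⟨h1, h2⟩ | ⟨h1, h2⟩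
        · exact ⟨q.copy h1 h2, by simpa using hq⟩
        · exact ⟨(q.copy h1 h2).reverse, by simpa using hq⟩
      · have : G.Adj x y := SimpleGraph.Walk.adj_of_mem_edges w hxy
        have hadj' : (G.deleteEdges (F : Set (Sym2 V))).Adj x y := by
          rw [SimpleGraph.deleteEdges_adj]
          exact ⟨this, by simpa using hxyF⟩
        exact ⟨hadj'.toWalk, by simpa using hℓk⟩
    obtain ⟨p, hp⟩ := walk_replace (G' := G.deleteEdges (F : Set (Sym2 V))) w (ℓ ^ k) hrep
    refine ⟨p, ?_⟩
    calc p.length ≤ ℓ ^ k * w.length := hp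
      _ ≤ ℓ ^ k * ℓ := Nat.mul_le_mul_left _ (hdil e he w hw)
      _ = ℓ ^ (k+1) := (pow_succ ℓ k).symm

end Aux

/-- If `F ⊆ E(G)` is `d`-routable in `G` with congestion `c < d` and
dilation `ℓ`, then for every edge `(u,v) ∈ F` one has
`dist_{G\F}(u,v) ≤ ℓ^k` where `k = ⌈2·log n / log(d/c)⌉`. -/
theorem routable_distance_bound {V : Type} [Fintype V] [DecidableEq V]
    (G : SimpleGraph V) (d c ℓ : ℕ)
    (F : Finset (Sym2 V)) (hF : (F : Set (Sym2 V)) ⊆ G.edgeSet)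
    (R : DRouting G F d) (hcong : R.CongestionLE c) (hdil : R.DilationLE ℓ)
    (hcd : c < d) :
    ∀ e ∈ F, ∀ u v : V, e = s(u, v) →
      (G.deleteEdges (F : Set (Sym2 V))).edist u v ≤
        (ℓ : ℕ∞) ^ ⌈2 * Real.log (Fintype.card V) / Real.log ((d : ℝ) / c)⌉₊ := by
  intro e he u v huv
  have hd : 0 < d := by omega
  set n := Fintype.card V with hn
  set k := ⌈2 * Real.log (n : ℕ) / Real.log ((d : ℝ) / c)⌉₊ with hk
  -- basic facts
  have hee : e = s(R.src e, R.dst e) := R.endpoint_eq e he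
  have hadj : G.Adj (R.src e) (R.dst e) := by
    have := hF he; rw [hee] at this; exact this
  -- c ≥ 1
  have hc1 : 1 ≤ c := by
    by_contra hc0
    push_neg at hc0
    interval_cases c
    obtain ⟨w, hw⟩ := Multiset.card_pos_iff_exists_mem.mp
      (by rw [R.card_walks e he]; exact hd)
    have hwl : 0 < w.length := by
      rcases Nat.eq_zero_or_pos w.length with h0 | h0
      · exact absurd (SimpleGraph.Walk.eq_of_length_eq_zero h0) hadj.ne
      · exact h0
    obtain ⟨f, hf⟩ : ∃ f, f ∈ w.edges := by
      have : w.edges.length = w.length := SimpleGraph.Walk.length_edges w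
      rcases List.exists_mem_of_length_pos (by omega : 0 < w.edges.length) with ⟨f, hf⟩
      exact ⟨f, hf⟩
    have h1 : 1 ≤ (R.walks e).countP (fun w => f ∈ w.edges) :=
      Multiset.countP_pos.mpr ⟨w, hw, hf⟩
    have h2 : 1 ≤ ∑ e' ∈ F, Multiset.countP (fun w => f ∈ w.edges) (R.walks e') :=
      le_trans h1 (Finset.single_le_sum
        (f := fun e' => Multiset.countP (fun w => f ∈ w.edges) (R.walks e'))
        (fun _ _ => Nat.zero_le _) he)
    exact absurd (hcong f) (by omega)
  -- n ≥ 2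
  have hn2 : 2 ≤ n := by
    have : Nontrivial V := ⟨⟨R.src e, R.dst e, hadj.ne⟩⟩
    exact Fintype.one_lt_card
  -- real-number facts
  have hcR : (0:ℝ) < c := by exact_mod_cast hc1
  have hdR : (0:ℝ) < d := by exact_mod_cast hd
  have hdc1 : (1:ℝ) < (d:ℝ)/c := by
    rw [lt_div_iff₀ hcR]; exact_mod_cast by simpa using hcd
  have hlogdc : 0 < Real.log ((d:ℝ)/c) := Real.log_pos hdc1
  -- (d/c)^k ≥ n^2
  have hkge : 2 * Real.log (n : ℕ) / Real.log ((d : ℝ) / c) ≤ (k : ℝ) := Nat.le_ceil _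
  have hpow : ((n:ℝ))^2 ≤ ((d:ℝ)/c)^k := by
    have h1 : 2 * Real.log n ≤ k * Real.log ((d:ℝ)/c) := by
      rw [div_le_iff₀ hlogdc] at hkge
      linarith
    have h2 : Real.log (((n:ℝ))^2) ≤ Real.log (((d:ℝ)/c)^k) := by
      rw [Real.log_pow, Real.log_pow]
      push_cast
      linarith
    have hnpos : (0:ℝ) < ((n:ℝ))^2 := by positivity
    have hppos : (0:ℝ) < ((d:ℝ)/c)^k := by positivity
    exact (Real.log_le_log_iff hnpos hppos).mp h2
  -- |F| < n^2
  have hFcard : (F.card : ℝ) < ((n:ℝ))^2 := by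
    have h1 : F.card ≤ Fintype.card (Sym2 V) := F.card_le_univ
    have h2 : Fintype.card (Sym2 V) = Nat.choose (n + 1) 2 := Sym2.card
    have h3 : Nat.choose (n + 1) 2 < n ^ 2 := by
      rw [Nat.choose_two_right]
      simp only [Nat.add_sub_cancel]
      rw [Nat.div_lt_iff_lt_mul (by norm_num)]
      nlinarith
    have : F.card < n ^ 2 := by omega
    exact_mod_cast this
  -- badness of e at level k is < 1
  have hBe : Bfun R k e < 1 := by
    have h1 : Bfun R k e ≤ ∑ e' ∈ F, Bfun R k e' :=
      Finset.single_le_sum (fun f _ => Bfun_nonneg R k f) he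
    have h2 := Bfun_sum_le R hcong hd k
    have h3 : ((c:ℝ)/d)^k * F.card < ((c:ℝ)/d)^k * ((n:ℝ))^2 := by
      apply mul_lt_mul_of_pos_left hFcard (by positivity)
    have h4 : ((c:ℝ)/d)^k * ((n:ℝ))^2 ≤ 1 := by
      calc ((c:ℝ)/d)^k * ((n:ℝ))^2 ≤ ((c:ℝ)/d)^k * ((d:ℝ)/c)^k :=
            mul_le_mul_of_nonneg_left hpow (by positivity)
        _ = (((c:ℝ)/d) * ((d:ℝ)/c))^k := (mul_pow _ _ _).symm
        _ = 1 := by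
            rw [div_mul_div_comm, mul_comm, div_self (by positivity), one_pow]
    linarith
  -- get a good walk
  obtain ⟨p, hp⟩ := good_walk R hF hdil hd k e he hBe
  -- orient it
  have heq : s(R.src e, R.dst e) = s(u, v) := by rw [← hee, huv]
  rw [Sym2.eq_iff] at heq
  have : ∃ q : (G.deleteEdges (F : Set (Sym2 V))).Walk u v, q.length ≤ ℓ ^ k := by
    rcases heq with ⟨h1, h2⟩ | ⟨h1, h2⟩
    · exact ⟨p.copy h1 h2, by simpa using hp⟩
    · exact ⟨(p.copy h1 h2).reverse, by simpa using hp⟩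
  obtain ⟨q, hq⟩ := this
  calc (G.deleteEdges (F : Set (Sym2 V))).edist u v ≤ q.length :=
        SimpleGraph.edist_le q
    _ ≤ (ℓ : ℕ∞) ^ k := by
        rw [← Nat.cast_pow]
        exact_mod_cast hq
end

section
/- There exist absolute constants C, c > 0 such that for all positive integers n and f, every n-vertex unweighted graph G admits an f-FD 3-spanner H ⊆ G with at most C·f·n^{3/2}·(log n)^c edges. -/
open SimpleGraph

/-- `H` is an `f`-faulty-degree `t`-spanner of `G` (unweighted distances, `∞` when
disconnected, natural stretch factor `t`). -/
def IsFDSpanner {V : Type} (G H : SimpleGraph V) (f t : ℕ) : Prop :=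
  H ≤ G ∧ ∀ F : Set (Sym2 V), F ⊆ G.edgeSet → DegLE F f →
    ∀ u v : V,
      (H.deleteEdges F).edist u v ≤ (t : ℕ∞) * (G.deleteEdges F).edist u v

/-!
Every vertex `v` chooses up to `f + 1` neighbours as its centers, greedily, so that each center
serves at least `T ≈ f √n` clients while every vertex `u` has fewer than `T` neighbours `v` that
have at most `f` centers, none of them `u`. The spanner keeps the edges from vertices to their
centers, the edges from `u` to those unserved neighbours, and, for every vertex `u` and center `s`,
the edges from `u` to `2f + 1` clients of `s` adjacent to `u`. A surviving edge `uv` missing from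
the spanner has a surviving center edge `vs`, and among the `2f + 1` sampled clients `w` of `s`
one has both `uw` and `ws` surviving, giving the detour `u w s v`. Double counting bounds the
number of centers by `n (f + 1) / T ≤ √n`, so the spanner has `O(f n^{3/2})` edges.
-/

open Finset

section Faults

-- `Set.ncard` is `0` on infinite sets, so without `[Finite V]` `DegLE` would not bound them.
variable {V : Type} [Finite V] {F : Set (Sym2 V)} {f : ℕ}

theorem DegLE.card_le_of_forall_mem (hF : DegLE F f) {x : V} {D : Finset V}
    (hD : ∀ y ∈ D, s(x, y) ∈ F) : #D ≤ f := by
  rw [← Set.ncard_coe_finset]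
  refine le_trans (Set.ncard_le_ncard_of_injOn (fun y => s(x, y)) ?_ ?_ (Set.toFinite _)) (hF x)
  · exact fun y hy => ⟨hD y hy, Sym2.mem_mk_left x y⟩
  · exact fun a _ b _ hab => Sym2.congr_right.mp hab

theorem DegLE.exists_mem_notMem (hF : DegLE F f) (x : V) {D : Finset V} (hD : f + 1 ≤ #D) :
    ∃ y ∈ D, s(x, y) ∉ F := by
  by_contra! h
  have := hF.card_le_of_forall_mem h
  omega

theorem DegLE.exists_mem_notMem_and_notMem (hF : DegLE F f) (x z : V) {D : Finset V}
    (hD : 2 * f + 1 ≤ #D) : ∃ y ∈ D, s(x, y) ∉ F ∧ s(z, y) ∉ F := by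
  classical
  by_contra! h
  have hx := hF.card_le_of_forall_mem (D := {y ∈ D | s(x, y) ∈ F}) fun y hy =>
    (mem_filter.mp hy).2
  have hz := hF.card_le_of_forall_mem (D := {y ∈ D | s(x, y) ∉ F}) fun y hy =>
    h y (mem_filter.mp hy).1 (mem_filter.mp hy).2
  have := card_filter_add_card_filter_not (s := D) (fun y => s(x, y) ∈ F)
  omega

end Faults

namespace SimpleGraph

variable {V : Type*} {G H : SimpleGraph V}

theorem edist_le_mul_edist_of_adj {t : ℕ∞} (ht : t ≠ 0)
    (h : ∀ u v, G.Adj u v → H.edist u v ≤ t) (u v : V) :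
    H.edist u v ≤ t * G.edist u v := by
  obtain hG | hG := eq_or_ne (G.edist u v) ⊤
  · rw [hG, ENat.mul_top ht]; exact le_top
  obtain ⟨p, hp⟩ := exists_walk_of_edist_ne_top hG
  rw [← hp]
  clear hp hG
  induction p with
  | nil => simp
  | @cons a b c hab q ih =>
    calc H.edist a c ≤ H.edist a b + H.edist b c := SimpleGraph.edist_triangle
      _ ≤ t + t * q.length := add_le_add (h a b hab) ih
      _ = t * (q.cons hab).length := by rw [Walk.length_cons]; push_cast; ring

theorem ncard_edgeSet_le_sum_card [Fintype V] [DecidableEq V] (N : V → Finset V)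
    (hN : ∀ u v, G.Adj u v → v ∈ N u ∨ u ∈ N v) : G.edgeSet.ncard ≤ ∑ u, #(N u) := by
  have hsub : G.edgeSet ⊆ ↑(univ.biUnion fun u => (N u).image fun v => s(u, v)) := by
    intro e he
    induction e using Sym2.ind with
    | _ u v =>
      simp only [coe_biUnion, coe_univ, Set.mem_univ, coe_image, Set.iUnion_true, Set.mem_iUnion,
        Set.mem_image, mem_coe]
      rcases hN u v he with h | h
      · exact ⟨u, v, h, rfl⟩
      · exact ⟨v, u, h, Sym2.eq_swap⟩
  calc G.edgeSet.ncard ≤ #(univ.biUnion fun u => (N u).image fun v => s(u, v)) := by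
        rw [← Set.ncard_coe_finset]; exact Set.ncard_le_ncard hsub (Set.toFinite _)
    _ ≤ ∑ u, #((N u).image fun v => s(u, v)) := card_biUnion_le
    _ ≤ ∑ u, #(N u) := sum_le_sum fun u _ => card_image_le

end SimpleGraph

namespace FDSpanner

variable {V : Type} [DecidableEq V]

def addCenter (c : V → Finset V) (u : V) (D : Finset V) (v : V) : Finset V :=
  if v ∈ D then insert u (c v) else c v

theorem subset_addCenter (c : V → Finset V) (u : V) (D : Finset V) (v : V) :
    c v ⊆ addCenter c u D v := by
  unfold addCenter; split_ifs
  exacts [subset_insert _ _, Subset.rfl]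

theorem mem_addCenter {c : V → Finset V} {u s v : V} {D : Finset V} :
    s ∈ addCenter c u D v ↔ s ∈ c v ∨ v ∈ D ∧ s = u := by
  unfold addCenter; split_ifs with h <;> simp [h, or_comm]

variable [Fintype V]

theorem sum_card_lt_sum_card_addCenter {c : V → Finset V} {u : V} {D : Finset V}
    (hD : D.Nonempty) (hu : ∀ v ∈ D, u ∉ c v) :
    ∑ v, #(c v) < ∑ v, #(addCenter c u D v) := by
  obtain ⟨v, hv⟩ := hD
  refine sum_lt_sum (fun w _ => card_le_card (subset_addCenter c u D w)) ⟨v, mem_univ v, ?_⟩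
  rw [addCenter, if_pos hv, card_insert_of_notMem (hu v hv)]
  omega

variable (G : SimpleGraph V) (f T : ℕ)

structure IsCenterAssignment (c : V → Finset V) : Prop where
  adj : ∀ v, ∀ s ∈ c v, G.Adj v s
  card_le : ∀ v, #(c v) ≤ f + 1
  le_card_clients : ∀ v, ∀ s ∈ c v, T ≤ #{w | s ∈ c w}

def unserved [DecidableRel G.Adj] (c : V → Finset V) (u : V) : Finset V :=
  {v | G.Adj u v ∧ #(c v) ≤ f ∧ u ∉ c v}

structure IsSaturatedCenterAssignment [DecidableRel G.Adj] (c : V → Finset V) : Prop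
    extends IsCenterAssignment G f T c where
  card_unserved_lt : ∀ u, #(unserved G f c u) < T

variable {G f T}

theorem IsCenterAssignment.addCenter_unserved [DecidableRel G.Adj] {c : V → Finset V}
    (hc : IsCenterAssignment G f T c) {u : V} (hu : T ≤ #(unserved G f c u)) :
    IsCenterAssignment G f T (addCenter c u (unserved G f c u)) where
  adj v s hs := by
    obtain hs | ⟨hv, rfl⟩ := mem_addCenter.mp hs
    · exact hc.adj v s hs
    · exact (mem_filter.mp hv).2.1.symm
  card_le v := by
    unfold addCenter; split_ifs with hv
    · exact (card_insert_le _ _).trans (by have := (mem_filter.mp hv).2.2.1; omega)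
    · exact hc.card_le v
  le_card_clients v s hs := by
    obtain hs | ⟨-, rfl⟩ := mem_addCenter.mp hs
    · exact (hc.le_card_clients v s hs).trans <| card_le_card fun w hw =>
        mem_filter.mpr ⟨mem_univ w, subset_addCenter c u _ w (mem_filter.mp hw).2⟩
    · exact hu.trans <| card_le_card fun w hw =>
        mem_filter.mpr ⟨mem_univ w, mem_addCenter.mpr (Or.inr ⟨hw, rfl⟩)⟩

/-- A center assignment maximising `∑ v, #(c v)` is saturated: otherwise some `u` could become
a center for all of its unserved neighbours. -/
theorem exists_isSaturatedCenterAssignment [DecidableRel G.Adj] (hT : 0 < T) :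
    ∃ c, IsSaturatedCenterAssignment G f T c := by
  classical
  obtain ⟨c, hc, hmax⟩ := exists_max_image {c | IsCenterAssignment G f T c}
    (fun c => ∑ v, #(c v))
    ⟨fun _ => ∅, mem_filter.mpr ⟨mem_univ _, ⟨by simp, by simp, by simp⟩⟩⟩
  replace hc := (mem_filter.mp hc).2
  refine ⟨c, { hc with card_unserved_lt := fun u => ?_ }⟩
  by_contra! hu
  have hle := hmax _ (mem_filter.mpr ⟨mem_univ _, hc.addCenter_unserved hu⟩)
  have hlt := sum_card_lt_sum_card_addCenter (c := c) (u := u)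
    (card_pos.mp (hT.trans_le hu)) fun v hv => (mem_filter.mp hv).2.2.2
  omega

def centers (c : V → Finset V) : Finset V := univ.biUnion c

theorem mem_centers {c : V → Finset V} {s v : V} (hs : s ∈ c v) : s ∈ centers c :=
  mem_biUnion.mpr ⟨v, mem_univ v, hs⟩

theorem IsCenterAssignment.card_centers_mul_le {c : V → Finset V}
    (hc : IsCenterAssignment G f T c) :
    #(centers c) * T ≤ Fintype.card V * (f + 1) := by
  simpa only [smul_eq_mul, card_univ] using card_nsmul_le_card_nsmul (s := centers c) (t := univ)
    (fun s v => s ∈ c v) (fun s hs => by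
      obtain ⟨v, -, hs⟩ := mem_biUnion.mp hs
      exact hc.le_card_clients v s hs)
    (fun v _ => (card_le_card fun s hs => (mem_filter.mp hs).2).trans (hc.card_le v))

section Spanner

variable (G f) [DecidableRel G.Adj] (c : V → Finset V)

def cluster (u s : V) : Finset V := {w | G.Adj u w ∧ s ∈ c w}

noncomputable def clusterSample (u s : V) : Finset V :=
  (exists_subset_card_eq (min_le_right (2 * f + 1) #(cluster G c u s))).choose

noncomputable def spannerNbhd (u : V) : Finset V :=
  c u ∪ (centers c).biUnion (clusterSample G f c u) ∪ unserved G f c u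

noncomputable def spanner : SimpleGraph V :=
  G ⊓ SimpleGraph.fromRel fun u v => v ∈ spannerNbhd G f c u

variable {G f c}

theorem clusterSample_subset (u s : V) : clusterSample G f c u s ⊆ cluster G c u s :=
  (exists_subset_card_eq (min_le_right (2 * f + 1) #(cluster G c u s))).choose_spec.1

theorem card_clusterSample (u s : V) :
    #(clusterSample G f c u s) = min (2 * f + 1) #(cluster G c u s) :=
  (exists_subset_card_eq (min_le_right (2 * f + 1) #(cluster G c u s))).choose_spec.2

theorem card_clusterSample_of_notMem {u s v : V} (hv : v ∈ cluster G c u s)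
    (hv' : v ∉ clusterSample G f c u s) : #(clusterSample G f c u s) = 2 * f + 1 := by
  have := card_clusterSample (G := G) (f := f) (c := c) u s
  have := card_lt_card ⟨clusterSample_subset u s, fun h => hv' (h hv)⟩
  omega

theorem IsSaturatedCenterAssignment.card_spannerNbhd_le
    (hc : IsSaturatedCenterAssignment G f T c) (u : V) :
    #(spannerNbhd G f c u) ≤ f + 1 + #(centers c) * (2 * f + 1) + T := by
  have hsample : #((centers c).biUnion (clusterSample G f c u)) ≤ #(centers c) * (2 * f + 1) :=
    card_biUnion_le.trans <| (sum_le_card_nsmul _ _ _ fun s _ =>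
      (card_clusterSample u s).trans_le (min_le_left _ _))
  have := hc.card_le u
  have := hc.card_unserved_lt u
  have := card_union_le (c u ∪ (centers c).biUnion (clusterSample G f c u)) (unserved G f c u)
  have := card_union_le (c u) ((centers c).biUnion (clusterSample G f c u))
  unfold spannerNbhd
  omega

theorem spanner_le : spanner G f c ≤ G := inf_le_left

theorem spanner_adj_of_mem {u v : V} (h : G.Adj u v) (hv : v ∈ spannerNbhd G f c u) :
    (spanner G f c).Adj u v :=
  ⟨h, h.ne, Or.inl hv⟩

theorem IsSaturatedCenterAssignment.ncard_edgeSet_spanner_le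
    (hc : IsSaturatedCenterAssignment G f T c) :
    (spanner G f c).edgeSet.ncard ≤
      Fintype.card V * (f + 1 + #(centers c) * (2 * f + 1) + T) :=
  (ncard_edgeSet_le_sum_card _ fun _ _ (h : (spanner G f c).Adj _ _) => h.2.2).trans <| by
    simpa only [smul_eq_mul, card_univ] using sum_le_card_nsmul univ _ _ fun u _ =>
      hc.card_spannerNbhd_le u

theorem IsSaturatedCenterAssignment.edist_spanner_le_three
    (hc : IsSaturatedCenterAssignment G f T c) {F : Set (Sym2 V)} (hF : DegLE F f) {u v : V}
    (huv : G.Adj u v) (huvF : s(u, v) ∉ F) : ((spanner G f c).deleteEdges F).edist u v ≤ 3 := by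
  set H := (spanner G f c).deleteEdges F
  have edge {x y : V} (hxy : G.Adj x y) (hy : y ∈ spannerNbhd G f c x) (hxyF : s(x, y) ∉ F) :
      H.Adj x y :=
    deleteEdges_adj.mpr ⟨spanner_adj_of_mem hxy hy, hxyF⟩
  by_cases hv : v ∈ spannerNbhd G f c u
  · exact (edist_eq_one_iff_adj.mpr (edge huv hv huvF)).trans_le (by norm_num)
  by_cases hu : u ∈ spannerNbhd G f c v
  · rw [Sym2.eq_swap] at huvF
    exact (edist_eq_one_iff_adj.mpr (edge huv.symm hu huvF).symm).trans_le (by norm_num)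
  -- `v` has `f + 1` centers, so one of them, `s`, is joined to `v` by a surviving edge;
  -- `v` was left out of the sample of `s`'s cluster around `u`, so that sample is full.
  have hfull : f + 1 ≤ #(c v) := by
    by_contra h
    exact hv (mem_union_right _ (mem_filter.mpr ⟨mem_univ v, huv, by omega,
      fun h => hu (mem_union_left _ (mem_union_left _ h))⟩))
  obtain ⟨s, hs, hvsF⟩ := hF.exists_mem_notMem v hfull
  have hsample : #(clusterSample G f c u s) = 2 * f + 1 :=
    card_clusterSample_of_notMem (mem_filter.mpr ⟨mem_univ v, huv, hs⟩)
      fun h => hv (mem_union_left _ (mem_union_right _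
        (mem_biUnion.mpr ⟨s, mem_centers hs, h⟩)))
  obtain ⟨w, hw, huwF, hswF⟩ := hF.exists_mem_notMem_and_notMem u s hsample.ge
  obtain ⟨huw, hsw⟩ := (mem_filter.mp (clusterSample_subset u s hw)).2
  rw [Sym2.eq_swap] at hswF
  have huw' := edge huw (mem_union_left _ (mem_union_right _ (mem_biUnion.mpr
    ⟨s, mem_centers hs, hw⟩))) huwF
  have hws' := edge (hc.adj w s hsw) (mem_union_left _ (mem_union_left _ hsw)) hswF
  have hvs' := edge (hc.adj v s hs) (mem_union_left _ (mem_union_left _ hs)) hvsF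
  calc H.edist u v ≤ H.edist u w + H.edist w s + H.edist s v :=
        SimpleGraph.edist_triangle.trans (by gcongr; exact SimpleGraph.edist_triangle)
    _ = 3 := by
        rw [edist_eq_one_iff_adj.mpr huw', edist_eq_one_iff_adj.mpr hws',
          edist_eq_one_iff_adj.mpr hvs'.symm]
        rfl

theorem IsSaturatedCenterAssignment.isFDSpanner_spanner
    (hc : IsSaturatedCenterAssignment G f T c) : IsFDSpanner G (spanner G f c) f 3 :=
  ⟨spanner_le, fun _ _ hF u v => edist_le_mul_edist_of_adj (by norm_num) (fun _ _ h =>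
    hc.edist_spanner_le_three hF (deleteEdges_adj.mp h).1 (deleteEdges_adj.mp h).2) u v⟩

end Spanner

theorem IsSaturatedCenterAssignment.ncard_edgeSet_spanner_le_sqrt [DecidableRel G.Adj]
    {c : V → Finset V} (hf : 0 < f)
    (hc : IsSaturatedCenterAssignment G f ((f + 1) * ((Fintype.card V).sqrt + 1)) c) :
    (spanner G f c).edgeSet.ncard ≤ 9 * f * Fintype.card V * (Fintype.card V).sqrt := by
  have hedges := hc.ncard_edgeSet_spanner_le
  set n := Fintype.card V
  set r := n.sqrt
  have hcenters : #(centers c) ≤ r := by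
    have h1 : #(centers c) * (r + 1) * (f + 1) ≤ n * (f + 1) := by
      linarith [hc.card_centers_mul_le]
    have h2 := Nat.lt_succ_sqrt n
    by_contra!
    nlinarith [Nat.le_of_mul_le_mul_right h1 f.succ_pos]
  obtain hn | hn := Nat.eq_zero_or_pos n
  · rw [hn, zero_mul] at hedges
    exact hedges.trans (Nat.zero_le _)
  have hr : 1 ≤ r := Nat.sqrt_pos.mpr hn
  calc _ ≤ n * (f + 1 + #(centers c) * (2 * f + 1) + (f + 1) * (r + 1)) := hedges
    _ ≤ n * (9 * f * r) := Nat.mul_le_mul_left _ (by nlinarith)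
    _ = _ := by ring

end FDSpanner

theorem natCast_le_mul_rpow_mul_log {m n f : ℕ} (hn : 2 ≤ n) (h : m ≤ 9 * f * n * n.sqrt) :
    (m : ℝ) ≤ 15 * f * (n : ℝ) ^ ((3 : ℝ) / 2) * Real.log n := by
  have hpow : (n : ℝ) ^ ((3 : ℝ) / 2) = n * √n := by
    rw [show (3 : ℝ) / 2 = 1 + 1 / 2 by norm_num, Real.rpow_add (by positivity), Real.rpow_one,
      Real.sqrt_eq_rpow]
  have hlog : 9 ≤ 15 * Real.log n := by
    have := Real.log_le_log (by norm_num) (show (2 : ℝ) ≤ n by exact_mod_cast hn)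
    linarith [Real.log_two_gt_d9]
  calc (m : ℝ) ≤ 9 * (f * n * n.sqrt) := by rw [← mul_assoc, ← mul_assoc]; exact_mod_cast h
    _ ≤ 15 * Real.log n * (f * n * √n) := by gcongr; exact Real.nat_sqrt_le_real_sqrt
    _ = 15 * f * (n : ℝ) ^ ((3 : ℝ) / 2) * Real.log n := by rw [hpow]; ring

/-- There are absolute constants `C, c > 0` such that every `n`-vertex
unweighted graph admits an `f`-FD `3`-spanner with at most `C·f·n^{3/2}·(log n)^c` edges. -/
theorem fd_three_spanner_exists :
    ∃ C c : ℝ, 0 < C ∧ 0 < c ∧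
      ∀ (n f : ℕ), 0 < n → 0 < f →
        ∀ (V : Type) [Fintype V], Fintype.card V = n →
          ∀ G : SimpleGraph V,
            ∃ H : SimpleGraph V,
              IsFDSpanner G H f 3 ∧
              (H.edgeSet.ncard : ℝ) ≤ C * f * (n : ℝ) ^ ((3 : ℝ) / 2) * Real.log n ^ c := by
  refine ⟨15, 1, by norm_num, one_pos, fun n f hn hf V _ hV G => ?_⟩
  subst hV
  classical
  obtain ⟨c, hc⟩ := FDSpanner.exists_isSaturatedCenterAssignment (G := G) (f := f)
    (T := (f + 1) * ((Fintype.card V).sqrt + 1)) (by positivity)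
  refine ⟨FDSpanner.spanner G f c, hc.isFDSpanner_spanner, ?_⟩
  rw [Real.rpow_one]
  obtain hn1 | hn2 : Fintype.card V = 1 ∨ 2 ≤ Fintype.card V := by omega
  · have : Subsingleton V := Fintype.card_le_one_iff_subsingleton.mp hn1.le
    simp [edgeSet_eq_empty.mpr (Subsingleton.elim _ ⊥), hn1]
  · exact natCast_le_mul_rpow_mul_log hn2 (hc.ncard_edgeSet_spanner_le_sqrt hf)
end

section
/- Let H be an n-vertex graph with a strict linear order < on E(H), and let k be a positive integer. If |E(H)| ≥ k·n, then H contains at least k·n/2 distinct monotone k-trails. -/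
/-!
Add the edges one at a time in increasing order. For each vertex `v` let `h(v)` be the length,
capped at `k - 1`, of a longest monotone walk ending at `v` that uses only the edges added so far.
When an edge `uv` larger than all earlier ones arrives, `h(v)` rises to at least
`min (h(u) + 1) (k - 1)`, and if `h(u) = k - 1` then appending `uv` to a walk of that length gives a
new monotone `k`-trail ending at `v`; likewise with `u` and `v` swapped. In every case
`∑ h + #(monotone k-trails)` grows by at least `2`, so at the end it is at least `2|E|`; as
`∑ h ≤ (k - 1) n`, there are at least `2|E| - (k - 1) n ≥ (k + 1) n` monotone `k`-trails.
-/

open SimpleGraph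

/-- `lt` is a strict linear order on the edges of `H`. -/
def IsEdgeOrder {V : Type} (H : SimpleGraph V) (lt : Sym2 V → Sym2 V → Prop) : Prop :=
  (∀ e ∈ H.edgeSet, ¬ lt e e) ∧
  (∀ e₁ ∈ H.edgeSet, ∀ e₂ ∈ H.edgeSet, ∀ e₃ ∈ H.edgeSet, lt e₁ e₂ → lt e₂ e₃ → lt e₁ e₃) ∧
  (∀ e₁ ∈ H.edgeSet, ∀ e₂ ∈ H.edgeSet, e₁ ≠ e₂ → lt e₁ e₂ ∨ lt e₂ e₁)

theorem Finset.sum_add_add_le_sum_add_add {ι M : Type*} [Fintype ι] [DecidableEq ι]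
    [AddCommMonoid M] [PartialOrder M] [IsOrderedAddMonoid M] {f g : ι → M}
    (hfg : ∀ i, f i ≤ g i) {a b : ι} (hab : a ≠ b) :
    ∑ i, f i + (g a + g b) ≤ ∑ i, g i + (f a + f b) := by
  have hsub : ({a, b} : Finset ι) ⊆ univ := subset_univ _
  rw [← sum_sdiff hsub (f := f), ← sum_sdiff hsub (f := g), sum_pair hab, sum_pair hab,
    add_right_comm]
  gcongr with i
  exact hfg i

namespace SimpleGraph

variable {V : Type*} {H : SimpleGraph V} {lt : Sym2 V → Sym2 V → Prop}

theorem finite_setOf_walk_length [Finite V] (k : ℕ) :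
    {x : (u : V) × (v : V) × H.Walk u v | x.2.2.length = k}.Finite := by
  classical
  have := Fintype.ofFinite V
  refine (Set.finite_range fun x : (u : V) × (v : V) × {p : H.Walk u v // p.length = k} =>
    (⟨x.1, x.2.1, x.2.2.1⟩ : (u : V) × (v : V) × H.Walk u v)).subset ?_
  rintro ⟨u, v, p⟩ hp
  exact ⟨⟨u, v, p, hp⟩, rfl⟩

variable (H lt)

def monotoneTrails (S : Set (Sym2 V)) (k : ℕ) : Set ((u : V) × (v : V) × H.Walk u v) :=
  {x | x.2.2.length = k ∧ x.2.2.edges.IsChain lt ∧ ∀ e ∈ x.2.2.edges, e ∈ S}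

def HasMonotoneWalkTo (S : Set (Sym2 V)) (v : V) (j : ℕ) : Prop :=
  ∃ x ∈ H.monotoneTrails lt S j, x.2.1 = v

open scoped Classical in
noncomputable def monotoneHeight (S : Set (Sym2 V)) (K : ℕ) (v : V) : ℕ :=
  Nat.findGreatest (H.HasMonotoneWalkTo lt S v) K

variable {H lt} {S T : Set (Sym2 V)}

@[simp]
theorem mem_monotoneTrails {u v : V} {p : H.Walk u v} {k : ℕ} :
    ⟨u, v, p⟩ ∈ H.monotoneTrails lt S k ↔
      p.length = k ∧ p.edges.IsChain lt ∧ ∀ e ∈ p.edges, e ∈ S :=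
  Iff.rfl

theorem monotoneTrails_mono (hST : S ⊆ T) (k : ℕ) :
    H.monotoneTrails lt S k ⊆ H.monotoneTrails lt T k :=
  fun _ ⟨hlen, hchain, hS⟩ => ⟨hlen, hchain, fun e he => hST (hS e he)⟩

theorem monotoneTrails_finite [Finite V] (S : Set (Sym2 V)) (k : ℕ) :
    (H.monotoneTrails lt S k).Finite :=
  (finite_setOf_walk_length k).subset fun _ hx => hx.1

theorem monotoneTrails_edgeSet (k : ℕ) :
    H.monotoneTrails lt H.edgeSet k = {x | x.2.2.length = k ∧ x.2.2.edges.IsChain lt} :=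
  Set.ext fun x => and_congr_right fun _ =>
    and_iff_left fun _ he => x.2.2.edges_subset_edgeSet he

theorem hasMonotoneWalkTo_zero (S : Set (Sym2 V)) (v : V) : H.HasMonotoneWalkTo lt S v 0 :=
  ⟨⟨v, v, .nil⟩, ⟨rfl, List.isChain_nil, by simp⟩, rfl⟩

theorem HasMonotoneWalkTo.mono (hST : S ⊆ T) {v : V} {j : ℕ}
    (h : H.HasMonotoneWalkTo lt S v j) : H.HasMonotoneWalkTo lt T v j :=
  let ⟨x, hx, hxv⟩ := h
  ⟨x, monotoneTrails_mono hST j hx, hxv⟩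

theorem HasMonotoneWalkTo.of_succ {v : V} {j : ℕ} (h : H.HasMonotoneWalkTo lt S v (j + 1)) :
    H.HasMonotoneWalkTo lt S v j := by
  obtain ⟨⟨u, v, p⟩, hp, rfl⟩ := h
  obtain ⟨hlen, hchain, hS⟩ := mem_monotoneTrails.1 hp
  cases p with
  | nil => simp at hlen
  | cons _ q =>
    simp only [Walk.length_cons, Walk.edges_cons, List.mem_cons] at hlen hchain hS
    exact ⟨⟨_, _, q⟩, ⟨Nat.succ_injective hlen, hchain.tail, fun e he => hS e (.inr he)⟩,
      rfl⟩

theorem HasMonotoneWalkTo.of_le {v : V} {i j : ℕ} (hij : i ≤ j)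
    (h : H.HasMonotoneWalkTo lt S v j) : H.HasMonotoneWalkTo lt S v i := by
  induction j with
  | zero => rwa [Nat.le_zero.mp hij]
  | succ j ih =>
    rcases Nat.of_le_succ hij with hij | rfl
    · exact ih hij h.of_succ
    · exact h

theorem exists_mem_monotoneTrails_insert {u v : V} (huv : H.Adj u v)
    (hS : ∀ e ∈ S, lt e s(u, v)) {j : ℕ} (h : H.HasMonotoneWalkTo lt S u j) :
    ∃ x ∈ H.monotoneTrails lt (insert s(u, v) S) (j + 1),
      x.2.1 = v ∧ s(u, v) ∈ x.2.2.edges := by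
  obtain ⟨⟨a, u, p⟩, hp, rfl⟩ := h
  obtain ⟨hlen, hchain, hpS⟩ := mem_monotoneTrails.1 hp
  have hedges : (p.concat huv).edges = p.edges ++ [s(u, v)] := by
    rw [Walk.edges_concat, List.concat_eq_append]
  refine ⟨⟨a, v, p.concat huv⟩, ⟨by simp [hlen], ?_, fun e he => ?_⟩, rfl,
    by simp [hedges]⟩
  · rw [hedges]
    refine hchain.append (List.isChain_singleton _) fun x hx y hy => ?_
    obtain rfl : s(u, v) = y := by simpa using hy
    exact hS x (hpS x (List.mem_of_mem_getLast? hx))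
  · simp only [hedges, List.mem_append, List.mem_singleton] at he
    rcases he with he | rfl
    · exact Set.mem_insert_of_mem _ (hpS e he)
    · exact Set.mem_insert _ _

theorem HasMonotoneWalkTo.concat {u v : V} (huv : H.Adj u v) (hS : ∀ e ∈ S, lt e s(u, v))
    {j : ℕ} (h : H.HasMonotoneWalkTo lt S u j) :
    H.HasMonotoneWalkTo lt (insert s(u, v) S) v (j + 1) :=
  let ⟨x, hx, hxv, _⟩ := exists_mem_monotoneTrails_insert huv hS h
  ⟨x, hx, hxv⟩

section Height

open scoped Classical

theorem monotoneHeight_le (S : Set (Sym2 V)) (K : ℕ) (v : V) : H.monotoneHeight lt S K v ≤ K :=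
  Nat.findGreatest_le K

theorem le_monotoneHeight {K j : ℕ} {v : V} (hjK : j ≤ K) (h : H.HasMonotoneWalkTo lt S v j) :
    j ≤ H.monotoneHeight lt S K v :=
  Nat.le_findGreatest hjK h

theorem hasMonotoneWalkTo_monotoneHeight (S : Set (Sym2 V)) (K : ℕ) (v : V) :
    H.HasMonotoneWalkTo lt S v (H.monotoneHeight lt S K v) :=
  Nat.findGreatest_spec (Nat.zero_le K) (hasMonotoneWalkTo_zero S v)

end Height

theorem monotoneHeight_mono (hST : S ⊆ T) (K : ℕ) (v : V) :
    H.monotoneHeight lt S K v ≤ H.monotoneHeight lt T K v :=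
  le_monotoneHeight (monotoneHeight_le S K v) ((hasMonotoneWalkTo_monotoneHeight S K v).mono hST)

theorem min_monotoneHeight_succ_le {u v : V} (huv : H.Adj u v) (hS : ∀ e ∈ S, lt e s(u, v))
    (K : ℕ) :
    min (H.monotoneHeight lt S K u + 1) K ≤ H.monotoneHeight lt (insert s(u, v) S) K v := by
  rcases Nat.eq_zero_or_eq_succ_pred (min (H.monotoneHeight lt S K u + 1) K) with h | h
  · omega
  · rw [h]
    refine le_monotoneHeight (by omega) (HasMonotoneWalkTo.concat huv hS ?_)
    exact (hasMonotoneWalkTo_monotoneHeight S K u).of_le (by omega)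

theorem ncard_monotoneTrails_add_le_insert [Finite V] {u v : V} (huv : H.Adj u v)
    (hS : ∀ e ∈ S, lt e s(u, v)) (he : s(u, v) ∉ S) (K : ℕ) :
    (H.monotoneTrails lt S (K + 1)).ncard + (if H.monotoneHeight lt S K u = K then 1 else 0) +
        (if H.monotoneHeight lt S K v = K then 1 else 0) ≤
      (H.monotoneTrails lt (insert s(u, v) S) (K + 1)).ncard := by
  have hsub := monotoneTrails_mono (H := H) (lt := lt) (Set.subset_insert s(u, v) S) (K + 1)
  have hfin' := monotoneTrails_finite (H := H) (lt := lt) (insert s(u, v) S) (K + 1)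
  have hfin := hfin'.sdiff (t := H.monotoneTrails lt S (K + 1))
  rw [← Set.ncard_sdiff_add_ncard_of_subset hsub hfin']
  have hnew : ∀ {a b : V} (hab : H.Adj a b), s(a, b) = s(u, v) →
      H.monotoneHeight lt S K a = K → ∃ x ∈ H.monotoneTrails lt (insert s(u, v) S) (K + 1) \
        H.monotoneTrails lt S (K + 1), x.2.1 = b := by
    intro a b hab hbu ha
    have hwalk := hasMonotoneWalkTo_monotoneHeight (H := H) (lt := lt) S K a
    rw [ha] at hwalk
    obtain ⟨x, hx, hxb, hex⟩ := exists_mem_monotoneTrails_insert hab (hbu ▸ hS) hwalk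
    exact ⟨x, ⟨hbu ▸ hx, fun hxS => he (hbu ▸ hxS.2.2 _ hex)⟩, hxb⟩
  split_ifs with hu hv hv
  · obtain ⟨x, hx, rfl⟩ := hnew huv rfl hu
    obtain ⟨y, hy, hyu⟩ := hnew huv.symm Sym2.eq_swap hv
    have : 1 < _ :=
      (Set.one_lt_ncard hfin).2 ⟨x, hx, y, hy, fun hxy => huv.ne (hxy ▸ hyu).symm⟩
    omega
  · obtain ⟨x, hx, -⟩ := hnew huv rfl hu
    have := (Set.ncard_pos hfin).2 ⟨x, hx⟩
    omega
  · obtain ⟨x, hx, -⟩ := hnew huv.symm Sym2.eq_swap hv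
    have := (Set.ncard_pos hfin).2 ⟨x, hx⟩
    omega
  · omega

variable (H lt) in
noncomputable def monotonePotential [Fintype V] (S : Set (Sym2 V)) (K : ℕ) : ℕ :=
  ∑ v, H.monotoneHeight lt S K v + (H.monotoneTrails lt S (K + 1)).ncard

theorem monotonePotential_add_two_le_insert [Fintype V] {u v : V} (huv : H.Adj u v)
    (hS : ∀ e ∈ S, lt e s(u, v)) (he : s(u, v) ∉ S) (K : ℕ) :
    H.monotonePotential lt S K + 2 ≤ H.monotonePotential lt (insert s(u, v) S) K := by
  classical
  have hv := min_monotoneHeight_succ_le huv hS K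
  have hu := min_monotoneHeight_succ_le huv.symm (Sym2.eq_swap (a := u) ▸ hS) K
  rw [Sym2.eq_swap] at hu
  have hsum := Finset.sum_add_add_le_sum_add_add
    (monotoneHeight_mono (H := H) (lt := lt) (Set.subset_insert s(u, v) S) K) huv.ne
  have htrails := ncard_monotoneTrails_add_le_insert huv hS he K
  have := monotoneHeight_le (H := H) (lt := lt) S K u
  have := monotoneHeight_le (H := H) (lt := lt) S K v
  unfold monotonePotential
  split_ifs at htrails <;> omega

end SimpleGraph

theorem IsEdgeOrder.exists_max {V : Type} {H : SimpleGraph V} {lt : Sym2 V → Sym2 V → Prop}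
    (hord : IsEdgeOrder H lt) {S : Finset (Sym2 V)} (hS : ↑S ⊆ H.edgeSet) (hne : S.Nonempty) :
    ∃ e ∈ S, ∀ x ∈ S, x ≠ e → lt x e := by
  induction hne using Finset.Nonempty.cons_induction with
  | singleton a => exact ⟨a, Finset.mem_singleton_self a, fun x hx hxa => absurd
      (Finset.mem_singleton.1 hx) hxa⟩
  | cons a s has hs ih =>
    have hsE : ↑s ⊆ H.edgeSet := fun x hx => hS (Finset.mem_cons_of_mem hx)
    have haE : a ∈ H.edgeSet := hS (Finset.mem_cons_self a s)
    obtain ⟨e, he, hmax⟩ := ih hsE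
    rcases hord.2.2 a haE e (hsE he) (ne_of_mem_of_not_mem he has).symm with hae | hea
    · refine ⟨e, Finset.mem_cons_of_mem he, fun x hx hxe => ?_⟩
      rcases Finset.mem_cons.1 hx with rfl | hx
      exacts [hae, hmax x hx hxe]
    · refine ⟨a, Finset.mem_cons_self a s, fun x hx hxa => ?_⟩
      have hxs : x ∈ s := (Finset.mem_cons.1 hx).resolve_left hxa
      by_cases hxe : x = e
      · exact hxe ▸ hea
      · exact hord.2.1 x (hsE hxs) e (hsE he) a haE (hmax x hxs hxe) hea

theorem IsEdgeOrder.two_mul_card_le_monotonePotential {V : Type} [Fintype V] [DecidableEq V]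
    {H : SimpleGraph V} {lt : Sym2 V → Sym2 V → Prop} (hord : IsEdgeOrder H lt) (K : ℕ)
    (S : Finset (Sym2 V)) (hS : ↑S ⊆ H.edgeSet) :
    2 * S.card ≤ H.monotonePotential lt S K := by
  induction S using Finset.strongInduction with
  | H S ih =>
  rcases S.eq_empty_or_nonempty with rfl | hne
  · simp
  obtain ⟨e, he, hmax⟩ := hord.exists_max hS hne
  have hprev := ih (S.erase e) (Finset.erase_ssubset he)
    (fun x hx => hS (Finset.mem_of_mem_erase hx))
  induction e using Sym2.ind with
  | h u v =>
  have hstep := monotonePotential_add_two_le_insert (H := H) (lt := lt) (S := ↑(S.erase s(u, v)))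
    (hS he) (fun x hx => hmax x (Finset.mem_of_mem_erase hx) (Finset.ne_of_mem_erase hx))
    (Finset.notMem_erase _ _) K
  rw [← Finset.coe_insert, Finset.insert_erase he] at hstep
  have := Finset.card_erase_add_one he
  omega

/-- **medium monotone counting lemma.** If `|E(H)| ≥ k·n` then `H` contains
at least `k·n/2` distinct monotone `k`-trails. -/
theorem monotone_trail_count {V : Type} [Fintype V]
    (H : SimpleGraph V) (lt : Sym2 V → Sym2 V → Prop) (hord : IsEdgeOrder H lt)
    (k : ℕ) (hk : 0 < k)
    (hE : (k * Fintype.card V : ℝ) ≤ H.edgeSet.ncard) :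
    (k * Fintype.card V : ℝ) / 2 ≤
      ({x : (u : V) × (v : V) × H.Walk u v |
          x.2.2.length = k ∧ List.Chain' lt x.2.2.edges}.ncard : ℝ) := by
  classical
  obtain ⟨K, rfl⟩ : ∃ K, k = K + 1 := ⟨k - 1, by omega⟩
  have hpot := hord.two_mul_card_le_monotonePotential K H.edgeFinset (by simp)
  rw [monotonePotential, coe_edgeFinset, ← Set.ncard_coe_finset, coe_edgeFinset] at hpot
  have hheight : ∑ v, H.monotoneHeight lt H.edgeSet K v ≤ Fintype.card V * K :=
    Finset.sum_le_card_nsmul _ _ _ fun v _ => monotoneHeight_le _ K v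
  have hcount : (2 * H.edgeSet.ncard : ℝ) ≤
      Fintype.card V * K + (H.monotoneTrails lt H.edgeSet (K + 1)).ncard := by
    exact_mod_cast hpot.trans (by omega)
  push_cast at hE ⊢
  calc ((K + 1) * Fintype.card V : ℝ) / 2
      ≤ (H.monotoneTrails lt H.edgeSet (K + 1)).ncard := by
        nlinarith [(Fintype.card V).cast_nonneg (α := ℝ), K.cast_nonneg (α := ℝ)]
    _ = _ := by rw [monotoneTrails_edgeSet]; rfl
end

section
/- There exists an absolute constant A > 0 such that the following holds. Let H be an n-vertex graph with a strict linear order < on E(H) and an f-FD 2k-blocking set (F_e)_{e∈E(H)}, and suppose every vertex of H has degree at most Δ. Then the number of walks in H with exactly k pairwise distinct edges that are blocked is at most A·k^2·n·f·Δ^{k−1}. -/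
open SimpleGraph

/-- `Fb` is an `f`-FD `k`-blocking set for `H` with respect to the edge order `lt`:
each edge `e` gets a set `Fb e` of earlier edges of `H` with faulty-degree at most `f`,
and every cycle with at most `k` edges is "blocked" at its latest edge. -/
def IsFDBlockingSet {V : Type} (H : SimpleGraph V) (lt : Sym2 V → Sym2 V → Prop)
    (f k : ℕ) (Fb : Sym2 V → Set (Sym2 V)) : Prop :=
  (∀ e ∈ H.edgeSet, Fb e ⊆ H.edgeSet) ∧
  (∀ e ∈ H.edgeSet, ∀ v : V, {e' ∈ Fb e | v ∈ e'}.ncard ≤ f) ∧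
  (∀ e ∈ H.edgeSet, ∀ e' ∈ Fb e, lt e' e) ∧
  (∀ (v : V) (p : H.Walk v v), p.IsCycle → p.length ≤ k →
    ∀ e ∈ p.edges, (∀ e' ∈ p.edges, e' ≠ e → lt e' e) →
      ∃ e' ∈ Fb e, e' ∈ p.edges)

/-- A walk is *blocked* if it contains two edges `e, e'` with `e' ∈ Fb e`. -/
def Blocked {V : Type} {H : SimpleGraph V} (Fb : Sym2 V → Set (Sym2 V))
    {u v : V} (p : H.Walk u v) : Prop :=
  ∃ e ∈ p.edges, ∃ e' ∈ p.edges, e' ∈ Fb e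

/-! A blocked walk of length `k` has edges `e_i, e_j` with `i ≠ j` and `e_j ∈ F_{e_i}`, and after
reversing the walk we may take `i < j`. For fixed `i < j` such a walk is determined by its first
vertex and its steps: step `j` follows one of the at most `f` edges of `F_{e_i}` (already
determined, as `i < j`) at the current vertex, and each of the other `k - 1` steps one of at
most `Δ` edges. This gives at most `n f Δ^(k-1)` walks for each of the fewer than `k^2` pairs `(i, j)`. -/

theorem Set.Finite.exists_injOn_lt_ncard {α : Type*} {s : Set α} (hs : s.Finite) :
    ∃ g : α → ℕ, Set.MapsTo g s (Set.Iio s.ncard) ∧ Set.InjOn g s :=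
  hs.exists_injOn_of_encard_le <| by
    rw [← (Set.finite_Iio s.ncard).cast_ncard_eq, Set.ncard_Iio_nat, hs.cast_ncard_eq]

lemma Sym2.ncard_setOf_mk_mem_le {α : Type*} [Finite α] (a : α) (F : Set (Sym2 α)) :
    {w | s(a, w) ∈ F}.ncard ≤ {e ∈ F | a ∈ e}.ncard :=
  Set.ncard_le_ncard_of_injOn (fun w => s(a, w)) (fun _ hw => ⟨hw, Sym2.mem_mk_left _ _⟩)
    (fun _ _ _ _ h => Sym2.congr_right.1 h) (Set.toFinite _)

namespace SimpleGraph

variable {V : Type} {H : SimpleGraph V}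

abbrev SigmaWalk (H : SimpleGraph V) : Type := (u : V) × (v : V) × H.Walk u v

namespace Walk

def edgeAt {u v : V} (p : H.Walk u v) (t : ℕ) : Sym2 V := s(p.getVert t, p.getVert (t + 1))

lemma edgeAt_mem_edgeSet {u v : V} (p : H.Walk u v) {t : ℕ} (ht : t < p.length) :
    p.edgeAt t ∈ H.edgeSet :=
  p.adj_getVert_succ ht

lemma exists_edgeAt_eq_of_mem_edges {u v : V} (p : H.Walk u v) {e : Sym2 V}
    (he : e ∈ p.edges) : ∃ t < p.length, p.edgeAt t = e := by
  obtain ⟨t, ht, rfl⟩ := List.mem_iff_getElem.1 he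
  exact ⟨t, p.length_edges ▸ ht, (p.getElem_edges ht).symm⟩

lemma edgeAt_reverse {u v : V} (p : H.Walk u v) {t : ℕ} (ht : t < p.length) :
    p.reverse.edgeAt t = p.edgeAt (p.length - 1 - t) := by
  rw [edgeAt, edgeAt, getVert_reverse, getVert_reverse, Sym2.eq_swap,
    show p.length - t = p.length - 1 - t + 1 by omega,
    show p.length - (t + 1) = p.length - 1 - t by omega]

end Walk

namespace SigmaWalk

def reverse (x : H.SigmaWalk) : H.SigmaWalk := ⟨x.2.1, x.1, x.2.2.reverse⟩

lemma reverse_involutive : Function.Involutive (reverse (H := H)) := by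
  rintro ⟨u, v, p⟩
  simp [reverse]

lemma ext_getVert {x y : H.SigmaWalk} (hlen : x.2.2.length = y.2.2.length)
    (h : ∀ t ≤ x.2.2.length, x.2.2.getVert t = y.2.2.getVert t) : x = y := by
  obtain ⟨u, v, p⟩ := x
  obtain ⟨u', v', q⟩ := y
  dsimp only at hlen h
  obtain rfl : u = u' := by simpa using h 0 (Nat.zero_le _)
  obtain rfl : v = v' := by
    have hv := h p.length le_rfl
    rwa [Walk.getVert_length, hlen, Walk.getVert_length] at hv
  rw [Walk.ext_getVert_le_length hlen h]

lemma finite_setOf_length_eq [Finite V] (k : ℕ) : {x : H.SigmaWalk | x.2.2.length = k}.Finite :=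
  Set.Finite.of_injOn (f := fun x (t : Fin (k + 1)) => x.2.2.getVert t) (Set.mapsTo_univ _ _)
    (fun x hx y hy hxy => ext_getVert (hx.trans hy.symm) fun t ht => by
      simpa using congrFun hxy ⟨t, by simp only [Set.mem_ofPred_eq] at hx; omega⟩)
    Set.finite_univ

theorem ncard_le_of_getVert_succ_mem [Fintype V] {S : Set H.SigmaWalk} {k : ℕ} (b : ℕ → ℕ)
    (N : ℕ → H.SigmaWalk → Set V) (hlen : ∀ x ∈ S, x.2.2.length = k)
    (hmem : ∀ x ∈ S, ∀ t < k, x.2.2.getVert (t + 1) ∈ N t x)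
    (hcard : ∀ x ∈ S, ∀ t < k, (N t x).ncard ≤ b t)
    (hprefix : ∀ x ∈ S, ∀ y ∈ S, ∀ t < k,
      (∀ s ≤ t, x.2.2.getVert s = y.2.2.getVert s) → N t x = N t y) :
    S.ncard ≤ Fintype.card V * ∏ t ∈ Finset.range k, b t := by
  -- The code of a step depends only on its candidate set, so two walks with a common prefix
  -- code their next vertex by the same injection.
  choose c hc using fun s : Set V => s.toFinite.exists_injOn_lt_ncard
  let code : S → V × ((t : Fin k) → Fin (b t)) := fun x =>
    (x.1.2.2.getVert 0, fun t => ⟨c (N t x) (x.1.2.2.getVert (t + 1)),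
      ((hc _).1 (hmem x x.2 t t.2)).trans_le (hcard x x.2 t t.2)⟩)
  have hcode : Function.Injective code := by
    rintro ⟨x, hx⟩ ⟨y, hy⟩ hxy
    simp only [code, Prod.mk.injEq, funext_iff, Fin.ext_iff] at hxy
    obtain ⟨h0, hstep⟩ := hxy
    have hagree : ∀ t ≤ k, ∀ s ≤ t, x.2.2.getVert s = y.2.2.getVert s := by
      intro t
      induction t with
      | zero => rintro - s hs; rwa [Nat.le_zero.1 hs]
      | succ t ih =>
        intro ht s hs
        rcases Nat.lt_or_eq_of_le hs with hs | rfl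
        · exact ih (by omega) s (by omega)
        · have hN := hprefix x hx y hy t ht (ih (by omega))
          exact (hc _).2 (hmem x hx t ht) (hN ▸ hmem y hy t ht)
            (by simpa [hN] using hstep ⟨t, ht⟩)
    exact Subtype.ext (ext_getVert ((hlen x hx).trans (hlen y hy).symm)
      fun t ht => hagree _ (hlen x hx ▸ le_rfl) t ht)
  calc S.ncard = Nat.card S := (Nat.card_coe_set_eq S).symm
    _ ≤ Nat.card (V × ((t : Fin k) → Fin (b t))) := Nat.card_le_card_of_injective code hcode
    _ = Fintype.card V * ∏ t ∈ Finset.range k, b t := by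
      simp [Nat.card_eq_fintype_card, Fin.prod_univ_eq_prod_range]

end SigmaWalk

lemma exists_edgeAt_mem_of_blocked {Fb : Sym2 V → Set (Sym2 V)}
    (hirrefl : ∀ e ∈ H.edgeSet, e ∉ Fb e) {u v : V} {p : H.Walk u v} (hp : Blocked Fb p) :
    ∃ i < p.length, ∃ j < p.length, i ≠ j ∧ p.edgeAt j ∈ Fb (p.edgeAt i) := by
  obtain ⟨e, he, e', he', hFb⟩ := hp
  obtain ⟨i, hi, rfl⟩ := p.exists_edgeAt_eq_of_mem_edges he
  obtain ⟨j, hj, rfl⟩ := p.exists_edgeAt_eq_of_mem_edges he'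
  refine ⟨i, hi, j, hj, ?_, hFb⟩
  rintro rfl
  exact hirrefl _ (p.edgeAt_mem_edgeSet hi) hFb

def pairBlockedWalks (H : SimpleGraph V) (Fb : Sym2 V → Set (Sym2 V)) (k i j : ℕ) :
    Set H.SigmaWalk :=
  {x | x.2.2.length = k ∧ x.2.2.edgeAt j ∈ Fb (x.2.2.edgeAt i)}

lemma preimage_reverse_pairBlockedWalks {Fb : Sym2 V → Set (Sym2 V)} {k i j : ℕ}
    (hi : i < k) (hj : j < k) :
    SigmaWalk.reverse ⁻¹' pairBlockedWalks H Fb k i j =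
      pairBlockedWalks H Fb k (k - 1 - i) (k - 1 - j) := by
  ext ⟨u, v, p⟩
  simp only [pairBlockedWalks, SigmaWalk.reverse, Set.mem_preimage, Set.mem_ofPred_eq,
    Walk.length_reverse]
  refine and_congr_right fun hlen => ?_
  rw [p.edgeAt_reverse (hlen ▸ hi), p.edgeAt_reverse (hlen ▸ hj), hlen]

lemma ncard_pairBlockedWalks_reverse {Fb : Sym2 V → Set (Sym2 V)} {k i j : ℕ}
    (hi : i < k) (hj : j < k) :
    (pairBlockedWalks H Fb k (k - 1 - i) (k - 1 - j)).ncard =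
      (pairBlockedWalks H Fb k i j).ncard := by
  rw [← preimage_reverse_pairBlockedWalks hi hj]
  exact Set.ncard_preimage_of_injective_subset_range SigmaWalk.reverse_involutive.injective
    (by simp [SigmaWalk.reverse_involutive.surjective.range_eq])

section Counting

variable [Fintype V] {Fb : Sym2 V → Set (Sym2 V)} {f Δ : ℕ}

theorem ncard_pairBlockedWalks_le_of_lt (hdeg : ∀ v : V, (H.neighborSet v).ncard ≤ Δ)
    (hF : ∀ e ∈ H.edgeSet, ∀ v : V, {e' ∈ Fb e | v ∈ e'}.ncard ≤ f) {k i j : ℕ}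
    (hij : i < j) (hjk : j < k) :
    (pairBlockedWalks H Fb k i j).ncard ≤ Fintype.card V * (f * Δ ^ (k - 1)) := by
  have hprod : ∏ t ∈ Finset.range k, (if t = j then f else Δ) = f * Δ ^ (k - 1) := by
    rw [Finset.prod_ite, Finset.filter_eq', Finset.filter_ne', if_pos (Finset.mem_range.2 hjk)]
    simp [Finset.card_erase_of_mem (Finset.mem_range.2 hjk)]
  rw [← hprod]
  refine SigmaWalk.ncard_le_of_getVert_succ_mem _
    (fun t x => if t = j then {w | s(x.2.2.getVert j, w) ∈ Fb (x.2.2.edgeAt i)}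
      else H.neighborSet (x.2.2.getVert t)) (fun x hx => hx.1) ?_ ?_ ?_
  · rintro x ⟨hlen, hx⟩ t ht
    split_ifs with htj
    · exact htj ▸ hx
    · exact x.2.2.adj_getVert_succ (by omega)
  · rintro x ⟨hlen, -⟩ t ht
    split_ifs with htj
    · exact (Sym2.ncard_setOf_mk_mem_le _ _).trans (hF _ (x.2.2.edgeAt_mem_edgeSet (by omega)) _)
    · exact hdeg _
  · intro x _ y _ t _ hxy
    split_ifs with htj
    · subst htj
      simp only [Walk.edgeAt, hxy i hij.le, hxy (i + 1) hij, hxy t le_rfl]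
    · rw [hxy t le_rfl]

theorem ncard_pairBlockedWalks_le (hdeg : ∀ v : V, (H.neighborSet v).ncard ≤ Δ)
    (hF : ∀ e ∈ H.edgeSet, ∀ v : V, {e' ∈ Fb e | v ∈ e'}.ncard ≤ f) {k i j : ℕ}
    (hik : i < k) (hjk : j < k) (hij : i ≠ j) :
    (pairBlockedWalks H Fb k i j).ncard ≤ Fintype.card V * (f * Δ ^ (k - 1)) := by
  rcases hij.lt_or_gt with hij | hji
  · exact ncard_pairBlockedWalks_le_of_lt hdeg hF hij hjk
  · have hrev := ncard_pairBlockedWalks_reverse (H := H) (Fb := Fb)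
      (show k - 1 - i < k by omega) (show k - 1 - j < k by omega)
    rw [show k - 1 - (k - 1 - i) = i by omega, show k - 1 - (k - 1 - j) = j by omega] at hrev
    rw [hrev]
    exact ncard_pairBlockedWalks_le_of_lt hdeg hF (by omega) (by omega)

theorem ncard_setOf_blocked_le (hirrefl : ∀ e ∈ H.edgeSet, e ∉ Fb e)
    (hdeg : ∀ v : V, (H.neighborSet v).ncard ≤ Δ)
    (hF : ∀ e ∈ H.edgeSet, ∀ v : V, {e' ∈ Fb e | v ∈ e'}.ncard ≤ f) (k : ℕ) :
    {x : H.SigmaWalk | x.2.2.length = k ∧ Blocked Fb x.2.2}.ncard ≤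
      k ^ 2 * (Fintype.card V * (f * Δ ^ (k - 1))) := by
  let W := fun ij : ℕ × ℕ => pairBlockedWalks H Fb k ij.1 ij.2
  have hcover : {x : H.SigmaWalk | x.2.2.length = k ∧ Blocked Fb x.2.2} ⊆
      ⋃ ij ∈ (Finset.range k).offDiag, W ij := by
    rintro x ⟨rfl, hx⟩
    obtain ⟨i, hi, j, hj, hij, hFb⟩ := exists_edgeAt_mem_of_blocked hirrefl hx
    exact Set.mem_biUnion (x := (i, j)) (by simp [hi, hj, hij]) ⟨rfl, hFb⟩
  calc _ ≤ (⋃ ij ∈ (Finset.range k).offDiag, W ij).ncard :=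
        Set.ncard_le_ncard hcover ((SigmaWalk.finite_setOf_length_eq k).subset
          (Set.iUnion₂_subset fun _ _ _ hx => hx.1))
    _ ≤ ∑ ij ∈ (Finset.range k).offDiag, (W ij).ncard := Finset.set_ncard_biUnion_le _ _
    _ ≤ ∑ _ ∈ (Finset.range k).offDiag, Fintype.card V * (f * Δ ^ (k - 1)) :=
        Finset.sum_le_sum fun ij hij => by
          obtain ⟨hi, hj, hne⟩ := Finset.mem_offDiag.1 hij
          exact ncard_pairBlockedWalks_le hdeg hF (Finset.mem_range.1 hi)
            (Finset.mem_range.1 hj) hne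
    _ ≤ k ^ 2 * (Fintype.card V * (f * Δ ^ (k - 1))) := by
        rw [Finset.sum_const, smul_eq_mul, Finset.offDiag_card, Finset.card_range, sq]
        exact Nat.mul_le_mul_right _ (Nat.sub_le _ _)

end Counting

end SimpleGraph

/-- **blocked path upper bound.** There is an absolute constant `A > 0` such
that for every `n`-vertex graph with an `f`-FD `2k`-blocking set and maximum degree at most
`Δ`, the number of edge-simple `k`-walks that are blocked is at most `A·k²·n·f·Δ^{k−1}`. -/
theorem blocked_count :
    ∃ A : ℝ, 0 < A ∧
      ∀ (V : Type) [Fintype V], ∀ (H : SimpleGraph V) (lt : Sym2 V → Sym2 V → Prop)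
        (Fb : Sym2 V → Set (Sym2 V)) (f k Δ : ℕ),
        0 < k → IsEdgeOrder H lt → IsFDBlockingSet H lt f (2 * k) Fb →
        (∀ v : V, (H.neighborSet v).ncard ≤ Δ) →
        ({x : (u : V) × (v : V) × H.Walk u v |
            x.2.2.length = k ∧ x.2.2.edges.Nodup ∧ Blocked Fb x.2.2}.ncard : ℝ) ≤
          A * (k : ℝ) ^ 2 * Fintype.card V * f * (Δ : ℝ) ^ (k - 1) := by
  refine ⟨1, one_pos, fun V _ H lt Fb f k Δ _ hord hblock hdeg => ?_⟩
  have hirrefl : ∀ e ∈ H.edgeSet, e ∉ Fb e :=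
    fun e he hee => hord.1 e he (hblock.2.2.1 e he e hee)
  calc _ ≤ ((k ^ 2 * (Fintype.card V * (f * Δ ^ (k - 1))) : ℕ) : ℝ) := by
        refine Nat.cast_le.2 ((Set.ncard_le_ncard ?_ ?_).trans
          (ncard_setOf_blocked_le hirrefl hdeg hblock.2.1 k))
        · exact fun x hx => ⟨hx.1, hx.2.2⟩
        · exact (SigmaWalk.finite_setOf_length_eq k).subset fun x hx => hx.1
    _ = _ := by push_cast; ring
end

section
/- Let Γ be an undirected unweighted graph in which every cycle has more than 2k edges (girth > 2k), and let f ≥ 1 be an integer. Let G be the graph obtained from Γ by replacing each vertex v with f copies v_1,…,v_f and replacing each edge (u,v) of Γ by the complete bipartite graph between {u_1,…,u_f} and {v_1,…,v_f}. Then every subgraph H of G that is an f-FD (2k−1)-spanner of G equals G itself. -/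
/-!
Suppose `H` misses an edge `xy` of the blowup. Fail all other lifts of the edge `x.1 y.1`
of `Γ`: every vertex meets at most `f` of them, and `x, y` stay adjacent. In `H` minus the
faults, projecting to `Γ` turns an `x`–`y` walk into an `x.1`–`y.1` walk avoiding the edge
`x.1 y.1`, which closes up into a cycle; so its length is at least `girth Γ - 1 ≥ 2k`,
more than the allowed stretch `2k - 1`.
-/

open SimpleGraph

/-- The graph obtained from `Γ` by replacing each vertex with `f` copies and each edge with
a complete bipartite graph between the copies of its endpoints. -/
def blowup {W : Type} (Γ : SimpleGraph W) (f : ℕ) : SimpleGraph (W × Fin f) where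
  Adj x y := Γ.Adj x.1 y.1
  symm := ⟨fun _ _ h => Γ.adj_symm h⟩
  loopless := ⟨fun x h => Γ.irrefl h⟩

namespace SimpleGraph

variable {V V' : Type*} {G : SimpleGraph V} {G' : SimpleGraph V'}

theorem Hom.edist_le (φ : G →g G') (u v : V) : G'.edist (φ u) (φ v) ≤ G.edist u v := by
  by_cases h : G.edist u v = ⊤
  · exact h ▸ le_top
  obtain ⟨p, hp⟩ := exists_walk_of_edist_ne_top h
  rw [← hp, ← p.length_map φ]
  exact (p.map φ).edist_le

theorem Walk.egirth_le_length_add_one [DecidableEq V] {a b : V} (hab : G.Adj a b)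
    (p : (G.deleteEdges {s(a, b)}).Walk a b) : G.egirth ≤ p.length + 1 := by
  have hedges : ∀ e ∈ p.bypass.edges, e ∈ G.edgeSet := fun e he =>
    edgeSet_mono (G.deleteEdges_le _) (p.bypass.edges_subset_edgeSet he)
  set q : G.Walk a b := p.bypass.transfer G hedges
  have hq : q.IsPath := p.bypass_isPath.transfer hedges
  have hba : s(b, a) ∉ q.edges := by
    rw [Walk.edges_transfer]
    intro hmem
    exact ((deleteEdges_adj ..).1 (p.bypass.adj_of_mem_edges hmem)).2 Sym2.eq_swap
  have hcycle : (Walk.cons hab.symm q).IsCycle := (Walk.cons_isCycle_iff q hab.symm).2 ⟨hq, hba⟩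
  calc G.egirth ≤ (Walk.cons hab.symm q).length := egirth_le_length hcycle
    _ ≤ p.length + 1 := by
      rw [Walk.length_cons, Walk.length_transfer]
      exact_mod_cast Nat.add_le_add_right p.length_bypass_le_length 1

theorem egirth_le_edist_deleteEdges_add_one {a b : V} (hab : G.Adj a b) :
    G.egirth ≤ (G.deleteEdges {s(a, b)}).edist a b + 1 := by
  classical
  by_cases h : (G.deleteEdges {s(a, b)}).edist a b = ⊤
  · simp [h]
  obtain ⟨p, hp⟩ := exists_walk_of_edist_ne_top h
  exact hp ▸ p.egirth_le_length_add_one hab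

end SimpleGraph

section Lifts

variable {W α : Type}

def otherLifts (x y : W × α) : Set (Sym2 (W × α)) :=
  {e | e.map Prod.fst = s(x.1, y.1)} \ {s(x, y)}

theorem incident_lifts_subset_range [DecidableEq W] (v : W × α) (a b : W) :
    {e : Sym2 (W × α) | v ∈ e ∧ e.map Prod.fst = s(a, b)} ⊆
      Set.range fun j : α => s(v, (if v.1 = a then b else a, j)) := by
  rintro e ⟨hv, hproj⟩
  obtain ⟨w, rfl⟩ := Sym2.mem_iff_exists.mp hv
  rw [Sym2.map_mk] at hproj
  refine ⟨w.2, ?_⟩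
  have hw : w.1 = if v.1 = a then b else a := by
    rcases Sym2.eq_iff.mp hproj with ⟨h1, h2⟩ | ⟨h1, h2⟩ <;> by_cases hva : v.1 = a <;> simp_all
  rw [← hw]

theorem degLE_otherLifts [Fintype α] (x y : W × α) :
    DegLE (otherLifts x y) (Fintype.card α) := by
  classical
  intro v
  have hsub : {e ∈ otherLifts x y | v ∈ e} ⊆ _ :=
    fun e he => incident_lifts_subset_range v x.1 y.1 ⟨he.2, he.1.1⟩
  calc _ ≤ _ := Set.ncard_le_ncard hsub (Set.finite_range _)
    _ ≤ (Set.univ : Set α).ncard := Set.image_univ.symm ▸ Set.ncard_image_le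
    _ = Fintype.card α := by rw [Set.ncard_univ, Nat.card_eq_fintype_card]

end Lifts

section Blowup

variable {W : Type} {Γ : SimpleGraph W} {f : ℕ} {x y : W × Fin f}

theorem otherLifts_subset_edgeSet (hxy : Γ.Adj x.1 y.1) : otherLifts x y ⊆ (blowup Γ f).edgeSet := by
  rintro ⟨u, w⟩ ⟨hproj, -⟩
  change s(u.1, w.1) = s(x.1, y.1) at hproj
  show Γ.Adj u.1 w.1
  rcases Sym2.eq_iff.mp hproj with ⟨h1, h2⟩ | ⟨h1, h2⟩
  · rwa [h1, h2]
  · rw [h1, h2]; exact hxy.symm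

theorem adj_deleteEdges_otherLifts {H : SimpleGraph (W × Fin f)} (hle : H ≤ blowup Γ f)
    (hxy : ¬H.Adj x y)
    {u w : W × Fin f} (huw : (H.deleteEdges (otherLifts x y)).Adj u w) :
    (Γ.deleteEdges {s(x.1, y.1)}).Adj u.1 w.1 := by
  rw [deleteEdges_adj] at huw ⊢
  refine ⟨hle huw.1, fun hproj => huw.2 ⟨Set.mem_singleton_iff.1 hproj, fun h => hxy ?_⟩⟩
  rcases Sym2.eq_iff.mp (Set.mem_singleton_iff.1 h) with ⟨rfl, rfl⟩ | ⟨rfl, rfl⟩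
  · exact huw.1
  · exact huw.1.symm

end Blowup

theorem blowup_spanner_lower_bound_general {W : Type}
    (Γ : SimpleGraph W) (k f : ℕ) (hk : 0 < k)
    (hgirth : ∀ (v : W) (p : Γ.Walk v v), p.IsCycle → 2 * k < p.length)
    (H : SimpleGraph (W × Fin f)) (hle : H ≤ blowup Γ f)
    (hspan : ∀ F : Set (Sym2 (W × Fin f)), F ⊆ (blowup Γ f).edgeSet → DegLE F f →
      ∀ u v : W × Fin f,
        (H.deleteEdges F).edist u v ≤
          ((2 * k - 1 : ℕ) : ℕ∞) * ((blowup Γ f).deleteEdges F).edist u v) :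
    H = blowup Γ f := by
  refine le_antisymm hle fun x y hadj => by_contra fun hxy => ?_
  have hΓ : Γ.Adj x.1 y.1 := hadj
  have hdeg : DegLE (otherLifts x y) f := by simpa using degLE_otherLifts x y
  have hG : ((blowup Γ f).deleteEdges (otherLifts x y)).edist x y ≤ 1 :=
    edist_le_one_iff_adj_or_eq.2 (.inl ((deleteEdges_adj ..).2 ⟨hadj, fun h => h.2 rfl⟩))
  have hH : (H.deleteEdges (otherLifts x y)).edist x y ≤ ((2 * k - 1 : ℕ) : ℕ∞) := by
    simpa using (hspan _ (otherLifts_subset_edgeSet hΓ) hdeg x y).trans (mul_le_mul_right hG _)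
  let π : H.deleteEdges (otherLifts x y) →g Γ.deleteEdges {s(x.1, y.1)} :=
    ⟨Prod.fst, adj_deleteEdges_otherLifts hle hxy⟩
  have hlen : ((2 * k + 1 : ℕ) : ℕ∞) ≤ ((2 * k - 1 : ℕ) : ℕ∞) + 1 := calc
    _ ≤ Γ.egirth := le_egirth.2 fun v p hp => by exact_mod_cast hgirth v p hp
    _ ≤ (Γ.deleteEdges {s(x.1, y.1)}).edist x.1 y.1 + 1 := egirth_le_edist_deleteEdges_add_one hΓ
    _ ≤ (H.deleteEdges (otherLifts x y)).edist x y + 1 := by gcongr; exact π.edist_le x y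
    _ ≤ _ := by gcongr
  norm_cast at hlen
  omega

/-- If `Γ` has girth `> 2k` and `f ≥ 1`, then the only `f`-FD
`(2k−1)`-spanner of the `f`-fold blowup `G` of `Γ` is `G` itself. -/
theorem blowup_spanner_lower_bound {W : Type} [Fintype W]
    (Γ : SimpleGraph W) (k f : ℕ) (hk : 0 < k) (hf : 1 ≤ f)
    (hgirth : ∀ (v : W) (p : Γ.Walk v v), p.IsCycle → 2 * k < p.length)
    (H : SimpleGraph (W × Fin f)) (hle : H ≤ blowup Γ f)
    (hspan : ∀ F : Set (Sym2 (W × Fin f)), F ⊆ (blowup Γ f).edgeSet → DegLE F f →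
      ∀ u v : W × Fin f,
        (H.deleteEdges F).edist u v ≤
          ((2 * k - 1 : ℕ) : ℕ∞) * ((blowup Γ f).deleteEdges F).edist u v) :
    H = blowup Γ f :=
  blowup_spanner_lower_bound_general Γ k f hk hgirth H hle hspan
end

section
/- Let G be a graph, F ⊆ E(G), and suppose there exists a d-routing of F in G with congestion c, where c < d. Then there exists a d-routing of F in G with congestion at most c such that for every edge (u,v) ∈ F, at least one of the d walks assigned to (u,v) uses no edge of F. -/
/-!
Among the routings of congestion at most `c`, take one minimizing, lexicographically, the
number of walks avoiding `F` and then the total length of the walks that do not avoid `F`.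
Suppose the set `U` of edges of `F` with no `F`-avoiding walk is nonempty. Its `d · |U|` walks
cannot all meet `U`, since each edge of `U` carries at most `c < d` walks; so some walk `w` of
some `e ∈ U` avoids `U` but passes through an edge `f ∈ F \ U`, which has an `F`-avoiding
walk `ω`. Replace each traversal of `f` in `w` by `ω`, and route `f` along its own edge instead
of along `ω`. The edge `f` trades its use by `w` for the one-edge walk, no other edge gains
more uses than it loses, and either an avoiding walk disappears or their number is
unchanged while a non-avoiding walk of length `≥ 2` becomes one of length `1`.
-/

open SimpleGraph

namespace SimpleGraph.Walk

variable {V : Type*} {G : SimpleGraph V}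

theorem one_lt_length_of_mem_edges {a b : V} {w : G.Walk a b} {z : Sym2 V}
    (hz : z ∈ w.edges) (hne : z ≠ s(a, b)) : 1 < w.length := by
  match w with
  | nil => simp at hz
  | cons _ nil => simp_all
  | cons _ (cons _ _) => simp

def Avoids {a b : V} (w : G.Walk a b) (F : Finset (Sym2 V)) : Prop := ∀ z ∈ w.edges, z ∉ F

variable [DecidableEq V]

instance {a b : V} (w : G.Walk a b) (F : Finset (Sym2 V)) : Decidable (w.Avoids F) :=
  inferInstanceAs (Decidable (∀ z ∈ w.edges, z ∉ F))

def orient {x y a b : V} (ω : G.Walk x y) (h : s(a, b) = s(x, y)) : G.Walk a b :=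
  if hc : a = x ∧ b = y then ω.copy hc.1.symm hc.2.symm
  else
    have h' := (Sym2.eq_iff.mp h).resolve_left hc
    ω.reverse.copy h'.1.symm h'.2.symm

theorem mem_edges_orient {x y a b : V} (ω : G.Walk x y) (h : s(a, b) = s(x, y)) {z : Sym2 V} :
    z ∈ (ω.orient h).edges ↔ z ∈ ω.edges := by
  unfold orient
  split <;> simp

/-- Replace every traversal of the edge `s(x, y)` in `w` by the walk `ω`. -/
def replaceEdge {x y : V} : ∀ {a b : V}, G.Walk a b → G.Walk x y → G.Walk a b
  | _, _, nil, _ => nil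
  | a, _, cons (v := v) h p, ω =>
    if hxy : s(a, v) = s(x, y) then (ω.orient hxy).append (p.replaceEdge ω)
    else cons h (p.replaceEdge ω)

theorem mem_edges_of_mem_edges_replaceEdge {x y a b : V} (w : G.Walk a b) (ω : G.Walk x y)
    {z : Sym2 V} (hz : z ∈ (w.replaceEdge ω).edges) :
    z ∈ ω.edges ∨ (z ∈ w.edges ∧ z ≠ s(x, y)) := by
  induction w with
  | nil => simp [replaceEdge] at hz
  | cons h p ih =>
    rw [replaceEdge] at hz
    split_ifs at hz with hxy
    · rcases List.mem_append.mp (edges_append _ _ ▸ hz) with hz | hz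
      · exact .inl ((mem_edges_orient ω hxy).mp hz)
      · exact (ih hz).imp_right fun h => ⟨List.mem_cons_of_mem _ h.1, h.2⟩
    · rcases List.mem_cons.mp hz with rfl | hz
      · exact .inr ⟨List.mem_cons_self, hxy⟩
      · exact (ih hz).imp_right fun h => ⟨List.mem_cons_of_mem _ h.1, h.2⟩

theorem ite_mem_edges_replaceEdge_add_le {x y a b : V} {w : G.Walk a b} {ω : G.Walk x y}
    (hw : s(x, y) ∈ w.edges) (hω : s(x, y) ∉ ω.edges) (z : Sym2 V) :
    (if z ∈ (w.replaceEdge ω).edges then 1 else 0) + (if z = s(x, y) then 1 else 0) ≤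
      (if z ∈ w.edges then 1 else 0) + (if z ∈ ω.edges then 1 else 0) := by
  rcases eq_or_ne z s(x, y) with rfl | hz
  · have hz' : s(x, y) ∉ (w.replaceEdge ω).edges := fun h =>
      (mem_edges_of_mem_edges_replaceEdge w ω h).elim hω fun h => h.2 rfl
    simp [hz', hw, hω]
  · by_cases hz' : z ∈ (w.replaceEdge ω).edges
    · rcases mem_edges_of_mem_edges_replaceEdge w ω hz' with h | h <;> simp [hz', hz, h]
    · simp [hz', hz]

end SimpleGraph.Walk

theorem Multiset.countP_eq_sum_map_ite {α : Type*} (p : α → Prop) [DecidablePred p]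
    (m : Multiset α) : m.countP p = (m.map fun x => if p x then 1 else 0).sum := by
  induction m using Multiset.induction_on <;> simp_all [Multiset.countP_cons]; omega

namespace DRouting

variable {V : Type} {G : SimpleGraph V} {F : Finset (Sym2 V)} {d : ℕ}

def load (R : DRouting G F d) (φ : ∀ {a b : V}, G.Walk a b → ℕ) : ℕ :=
  ∑ g ∈ F, ((R.walks g).map φ).sum

variable [DecidableEq V]

theorem congestionLE_iff (R : DRouting G F d) (c : ℕ) :
    R.CongestionLE c ↔ ∀ z, R.load (fun w => if z ∈ w.edges then 1 else 0) ≤ c := by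
  simp only [CongestionLE, load, Multiset.countP_eq_sum_map_ite]

/-- Reducible, so that the walks of `R` are walks of the new routing without casts. -/
abbrev replaceWalk (R : DRouting G F d) {e : Sym2 V} {w : G.Walk (R.src e) (R.dst e)}
    (hw : w ∈ R.walks e) (w' : G.Walk (R.src e) (R.dst e)) : DRouting G F d where
  src := R.src
  dst := R.dst
  endpoint_eq := R.endpoint_eq
  walks := Function.update R.walks e (w' ::ₘ (R.walks e).erase w)
  card_walks g hg := by
    rcases eq_or_ne g e with rfl | hne
    · rw [Function.update_self, Multiset.card_cons, Multiset.card_erase_add_one hw,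
        R.card_walks g hg]
    · rw [Function.update_of_ne hne, R.card_walks g hg]

theorem walks_replaceWalk_of_ne (R : DRouting G F d) {e : Sym2 V}
    {w : G.Walk (R.src e) (R.dst e)} (hw : w ∈ R.walks e) (w' : G.Walk (R.src e) (R.dst e))
    {g : Sym2 V} (hg : g ≠ e) : (R.replaceWalk hw w').walks g = R.walks g :=
  Function.update_of_ne hg _ _

theorem load_replaceWalk_add (R : DRouting G F d) {e : Sym2 V} (he : e ∈ F)
    {w : G.Walk (R.src e) (R.dst e)} (hw : w ∈ R.walks e) (w' : G.Walk (R.src e) (R.dst e))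
    (φ : ∀ {a b : V}, G.Walk a b → ℕ) :
    (R.replaceWalk hw w').load φ + φ w = R.load φ + φ w' := by
  have hrest : ∑ g ∈ F.erase e, (((R.replaceWalk hw w').walks g).map φ).sum =
      ∑ g ∈ F.erase e, ((R.walks g).map φ).sum :=
    Finset.sum_congr rfl fun g hg => by
      rw [walks_replaceWalk_of_ne _ _ _ (Finset.ne_of_mem_erase hg)]
  have he' : (R.replaceWalk hw w').walks e = w' ::ₘ (R.walks e).erase w := Function.update_self ..
  have herase := Multiset.sum_map_erase (f := φ) hw
  unfold load
  rw [← Finset.add_sum_erase F _ he, ← Finset.add_sum_erase F _ he, hrest, he',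
    Multiset.map_cons, Multiset.sum_cons]
  beta_reduce
  omega

theorem exists_load_add_eq_of_replace_two (R : DRouting G F d) {e f : Sym2 V} (he : e ∈ F)
    (hf : f ∈ F) (hef : e ≠ f) {w w' : G.Walk (R.src e) (R.dst e)} (hw : w ∈ R.walks e)
    {ω ω' : G.Walk (R.src f) (R.dst f)} (hω : ω ∈ R.walks f) :
    ∃ R' : DRouting G F d, ∀ φ : ∀ {a b : V}, G.Walk a b → ℕ,
      R'.load φ + φ w + φ ω = R.load φ + φ w' + φ ω' := by
  have hω₁ : ω ∈ (R.replaceWalk hw w').walks f := by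
    rwa [walks_replaceWalk_of_ne _ _ _ hef.symm]
  refine ⟨(R.replaceWalk hw w').replaceWalk hω₁ ω', fun φ => ?_⟩
  have h₁ := R.load_replaceWalk_add he hw w' φ
  have h₂ := (R.replaceWalk hw w').load_replaceWalk_add hf hω₁ ω' φ
  omega

def potential (R : DRouting G F d) : ℕ ×ₗ ℕ :=
  toLex (R.load fun w => if w.Avoids F then 1 else 0,
    R.load fun w => if w.Avoids F then 0 else w.length)

theorem exists_potential_lt_of_shortcut (hF : (F : Set (Sym2 V)) ⊆ G.edgeSet)
    (R : DRouting G F d) {c : ℕ} (hcong : R.CongestionLE c)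
    {e f : Sym2 V} (he : e ∈ F) (hf : f ∈ F) (hef : e ≠ f)
    {w : G.Walk (R.src e) (R.dst e)} (hw : w ∈ R.walks e) (hfw : f ∈ w.edges)
    {ω : G.Walk (R.src f) (R.dst f)} (hω : ω ∈ R.walks f) (hωF : ω.Avoids F) :
    ∃ R' : DRouting G F d, R'.CongestionLE c ∧ R'.potential < R.potential := by
  have hf_eq := R.endpoint_eq f hf
  have hadj : G.Adj (R.src f) (R.dst f) := G.mem_edgeSet.mp (hf_eq ▸ hF hf)
  have hfw' : s(R.src f, R.dst f) ∈ w.edges := hf_eq ▸ hfw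
  have hfF : s(R.src f, R.dst f) ∈ F := hf_eq ▸ hf
  obtain ⟨R', hload⟩ := R.exists_load_add_eq_of_replace_two he hf hef
    (w' := w.replaceEdge ω) hw (ω' := hadj.toWalk) hω
  have hsingle_edges : hadj.toWalk.edges = [s(R.src f, R.dst f)] := rfl
  refine ⟨R', (congestionLE_iff _ _).2 fun z => ?_, ?_⟩
  · have hz := hload fun p => if z ∈ p.edges then 1 else 0
    have hz₀ := (congestionLE_iff _ _).1 hcong z
    have hkey := Walk.ite_mem_edges_replaceEdge_add_le hfw' (fun h => hωF _ h hfF) z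
    beta_reduce at hz
    simp only [hsingle_edges, List.mem_singleton] at hz
    omega
  · have hA := hload fun p => if p.Avoids F then 1 else 0
    have hL := hload fun p => if p.Avoids F then 0 else p.length
    have hw_not : ¬ w.Avoids F := fun h => h f hfw hf
    have hsingle_not : ¬ hadj.toWalk.Avoids F := fun h => h _ (by simp [hsingle_edges]) hfF
    have hsingle_len : hadj.toWalk.length = 1 := rfl
    have hlen : 1 < w.length :=
      w.one_lt_length_of_mem_edges hfw fun h => hef ((R.endpoint_eq e he).trans h.symm)
    beta_reduce at hA hL
    rw [if_neg hw_not, if_pos hωF, if_neg hsingle_not] at hA hL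
    simp only [potential, Prod.Lex.toLex_lt_toLex]
    split_ifs at hA hL <;> omega

theorem exists_walk_avoids_of_subset (R : DRouting G F d) {c : ℕ} (hcong : R.CongestionLE c)
    (hcd : c < d) {U : Finset (Sym2 V)} (hUF : U ⊆ F) (hU : U.Nonempty) :
    ∃ g ∈ U, ∃ w ∈ R.walks g, w.Avoids U := by
  by_contra! hmeet
  suffices d * U.card ≤ c * U.card from
    absurd (Nat.le_of_mul_le_mul_right this hU.card_pos) (by omega)
  calc d * U.card = ∑ g ∈ U, ((R.walks g).map fun _ => 1).sum := by
        simp [Finset.sum_congr rfl fun g hg => R.card_walks g (hUF hg), mul_comm]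
    _ ≤ ∑ g ∈ U, ((R.walks g).map fun w => ∑ u ∈ U, if u ∈ w.edges then 1 else 0).sum := by
        refine Finset.sum_le_sum fun g hg => Multiset.sum_map_le_sum_map _ _ fun w hw => ?_
        obtain ⟨u, huw, hu⟩ : ∃ u ∈ w.edges, u ∈ U := by
          simpa [Walk.Avoids] using hmeet g hg w hw
        exact (Finset.single_le_sum (fun _ _ => Nat.zero_le _) hu).trans' (by simp [huw])
    _ ≤ ∑ g ∈ F, ((R.walks g).map fun w => ∑ u ∈ U, if u ∈ w.edges then 1 else 0).sum :=
        Finset.sum_le_sum_of_subset hUF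
    _ = ∑ u ∈ U, R.load fun w => if u ∈ w.edges then 1 else 0 := by
        simp only [load, Multiset.sum_map_sum]
        exact Finset.sum_comm
    _ ≤ ∑ _u ∈ U, c := Finset.sum_le_sum fun u _ => (congestionLE_iff R c).1 hcong u
    _ = c * U.card := by simp [mul_comm]

theorem exists_potential_lt (hF : (F : Set (Sym2 V)) ⊆ G.edgeSet) (R : DRouting G F d) {c : ℕ}
    (hcong : R.CongestionLE c) (hcd : c < d) {e₀ : Sym2 V} (he₀ : e₀ ∈ F)
    (hbad : ∀ w ∈ R.walks e₀, ¬ w.Avoids F) :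
    ∃ R' : DRouting G F d, R'.CongestionLE c ∧ R'.potential < R.potential := by
  set U := F.filter fun g => ∀ w ∈ R.walks g, ¬ w.Avoids F
  obtain ⟨e, heU, w, hw, hwU⟩ := R.exists_walk_avoids_of_subset hcong hcd (U := U)
    (Finset.filter_subset _ _) ⟨e₀, by simpa [U, he₀] using hbad⟩
  obtain ⟨he, he_bad⟩ := Finset.mem_filter.mp heU
  obtain ⟨f, hfw, hf⟩ : ∃ f ∈ w.edges, f ∈ F := by simpa [Walk.Avoids] using he_bad w hw
  obtain ⟨ω, hω, hωF⟩ : ∃ ω ∈ R.walks f, ω.Avoids F := by simpa [U, hf] using hwU f hfw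
  exact R.exists_potential_lt_of_shortcut hF hcong he hf (ne_of_mem_of_not_mem heU (hwU f hfw))
    hw hfw hω hωF

end DRouting

theorem rerouting_lemma_general {V : Type} [DecidableEq V]
    (G : SimpleGraph V) (F : Finset (Sym2 V)) (hF : (F : Set (Sym2 V)) ⊆ G.edgeSet)
    (d c : ℕ) (hcd : c < d)
    (R : DRouting G F d) (hcong : R.CongestionLE c) :
    ∃ R' : DRouting G F d, R'.CongestionLE c ∧
      ∀ e ∈ F, ∃ w ∈ R'.walks e, ∀ e' ∈ w.edges, e' ∉ F := by
  obtain ⟨R₀, hR₀, hmin⟩ := (InvImage.wf DRouting.potential wellFounded_lt).has_min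
    {R' : DRouting G F d | R'.CongestionLE c} ⟨R, hcong⟩
  refine ⟨R₀, hR₀, fun e he => ?_⟩
  by_contra hbad
  obtain ⟨R', hR', hlt⟩ := R₀.exists_potential_lt hF hR₀ hcd he fun w hw h => hbad ⟨w, hw, h⟩
  exact hmin R' hR' hlt

/-- **rerouting lemma.** If `F` admits a `d`-routing in `G` with congestion
`c < d`, then it admits a `d`-routing with congestion at most `c` in which every edge of
`F` has at least one of its `d` walks avoiding all edges of `F`. -/
theorem rerouting_lemma {V : Type} [Fintype V] [DecidableEq V]
    (G : SimpleGraph V) (F : Finset (Sym2 V)) (hF : (F : Set (Sym2 V)) ⊆ G.edgeSet)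
    (d c : ℕ) (hcd : c < d)
    (R : DRouting G F d) (hcong : R.CongestionLE c) :
    ∃ R' : DRouting G F d, R'.CongestionLE c ∧
      ∀ e ∈ F, ∃ w ∈ R'.walks e, ∀ e' ∈ w.edges, e' ∉ F :=
  rerouting_lemma_general G F hF d c hcd R hcong
end
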